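/- arXiv:1508.00496 — 8 statements merged into one kernel-verified Lean document; each statement's English description precedes it below -/
import Mathlib

section
/- Let E be a real Banach space, and let C and D be weak*-closed convex subsets of E* such that D is nonempty and bounded and there exists y ∈ L_D with sup{⟨y,c*⟩ : c* ∈ C} < +∞. Then the set Σ_C^D := {c* ∈ C : there exists x ∈ L_D with ⟨x,c*⟩ = sup{⟨x,z*⟩ : z* ∈ C}} satisfies C ⊆ norm-closure(Σ_C^D + Λ_D). -/
/-!
Write `σ_K x = sup_{k ∈ K} k x`. Fix `c₀ ∈ C` and `ε > 0`, and let `ρ = σ_J` for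
`J = [κ • D, closedBall 0 (ε / 2)]`, so that `ρ = max (κ σ_D) ((ε / 2) ‖·‖)` is an asymmetric
gauge dominating a multiple of the norm. Ekeland's principle for `f = σ_C - c₀`, started at `y`
and measured by `(x, z) ↦ ρ (z - x)`, gives `x` with `f x - ρ (· - x) ≤ f` and
`ρ (x - y) ≤ f y`; for `κ` large the latter puts `x` in `L_D`. A Hahn–Banach sandwich between the
concave `f x - ρ (· - x)` and the convex `f` produces `ℓ ∈ E*` with `ℓ (z - x) ≤ σ_C z - σ_C x`,
so that `ℓ ∈ C` attains `σ_C` at `x`, and with `c₀ - ℓ ≤ ρ`, so that `c₀ - ℓ ∈ J`. Writing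
`c₀ - ℓ = a • κ d + b • v` with `‖v‖ ≤ ε / 2` shows that `ℓ + aκ • d ∈ Σ_C^D + Λ_D` lies within
`ε / 2` of `c₀`.
-/

open Filter Topology Pointwise

/-- For a nonempty subset `D` of the dual, `L_D` is the set of `x ∈ E` with
`sup_{d* ∈ D} ⟨x, d*⟩ < 0`. -/
def LD {E : Type*} [NormedAddCommGroup E] [NormedSpace ℝ E]
    (D : Set (StrongDual ℝ E)) : Set E :=
  {x | ∃ r < (0 : ℝ), ∀ d ∈ D, d x ≤ r}

/-- `Λ_D = {0} ∪ {λ d* : λ > 0, d* ∈ D}`, the cone generated by `D`. -/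
def LambdaD {E : Type*} [NormedAddCommGroup E] [NormedSpace ℝ E]
    (D : Set (StrongDual ℝ E)) : Set (StrongDual ℝ E) :=
  {0} ∪ {z | ∃ l : ℝ, 0 < l ∧ ∃ d ∈ D, z = l • d}

open Set

section Ekeland

variable {X : Type*} {f : X → ℝ} {p : X → X → ℝ}

def descentSet (f : X → ℝ) (p : X → X → ℝ) (x : X) : Set X := {z | f z + p x z ≤ f x}

lemma self_mem_descentSet (hp_self : ∀ x, p x x = 0) (x : X) : x ∈ descentSet f p x := by
  simp [descentSet, hp_self]

lemma descentSet_subset (hp_triangle : ∀ x y z, p x z ≤ p x y + p y z) {x x' : X}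
    (hx' : x' ∈ descentSet f p x) : descentSet f p x' ⊆ descentSet f p x := fun z hz => by
  simp only [descentSet, mem_ofPred_eq] at *
  linarith [hp_triangle x x' z]

lemma le_of_mem_descentSet (hp : ∀ x z, 0 ≤ p x z) {x z : X} (hz : z ∈ descentSet f p x) :
    f z ≤ f x := by
  have : f z + p x z ≤ f x := hz
  linarith [hp x z]

lemma isClosed_descentSet [TopologicalSpace X] (hf : LowerSemicontinuous f) {x : X}
    (hp : LowerSemicontinuous (p x)) : IsClosed (descentSet f p x) :=
  (hf.add hp).isClosed_preimage (f x)

lemma exists_mem_descentSet_two_mul_le (hp_self : ∀ x, p x x = 0) (x : X) :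
    ∃ z ∈ descentSet f p x, 2 * f z ≤ f x + ⨅ w : descentSet f p x, f w := by
  have : Nonempty (descentSet f p x) := ⟨⟨x, self_mem_descentSet hp_self x⟩⟩
  rcases lt_or_ge (⨅ w : descentSet f p x, f w) (f x) with hμ | hμ
  · obtain ⟨⟨z, hz⟩, hzμ⟩ := exists_lt_of_ciInf_lt
      (f := fun w : descentSet f p x => f w) (a := (f x + ⨅ w : descentSet f p x, f w) / 2)
      (by linarith)
    exact ⟨z, hz, by linarith⟩
  · exact ⟨x, self_mem_descentSet hp_self x, by linarith⟩

variable [MetricSpace X] {c : ℝ}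

lemma cauchySeq_of_mem_descentSet (hf_bdd : BddBelow (range f)) (hc : 0 < c)
    (hp_dist : ∀ x z, c * dist x z ≤ p x z) {u : ℕ → X}
    (hu : ∀ n m, n ≤ m → u m ∈ descentSet f p (u n)) : CauchySeq u := by
  have hp : ∀ x z, 0 ≤ p x z := fun x z => (mul_nonneg hc.le dist_nonneg).trans (hp_dist x z)
  have hbdd : BddBelow (range fun n => f (u n)) := hf_bdd.mono (range_comp_subset_range _ _)
  have hL := tendsto_atTop_ciInf (fun n m hnm => le_of_mem_descentSet hp (hu n m hnm)) hbdd
  set L := ⨅ n, f (u n)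
  refine Metric.cauchySeq_iff'.2 fun ε hε => ?_
  obtain ⟨N, hN⟩ := (hL.eventually (gt_mem_nhds (lt_add_of_pos_right _ (mul_pos hc hε)))).exists
  refine ⟨N, fun n hn => ?_⟩
  have h₁ : f (u n) + p (u N) (u n) ≤ f (u N) := hu N n hn
  have h₂ : c * dist (u n) (u N) ≤ p (u N) (u n) := dist_comm (u n) (u N) ▸ hp_dist _ _
  have h₃ : L ≤ f (u n) := ciInf_le hbdd n
  have h₄ : f (u N) < L + c * ε := hN
  nlinarith

theorem LowerSemicontinuous.exists_ekeland [CompleteSpace X] (hf : LowerSemicontinuous f)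
    (hf_bdd : BddBelow (range f)) (hp_self : ∀ x, p x x = 0)
    (hp_triangle : ∀ x y z, p x z ≤ p x y + p y z) (hc : 0 < c)
    (hp_dist : ∀ x z, c * dist x z ≤ p x z) (hp_lsc : ∀ x, LowerSemicontinuous (p x)) (y : X) :
    ∃ x, f x + p y x ≤ f y ∧ ∀ z, f x ≤ f z + p x z := by
  have hp : ∀ x z, 0 ≤ p x z := fun x z => (mul_nonneg hc.le dist_nonneg).trans (hp_dist x z)
  choose next hnext_mem hnext_le using exists_mem_descentSet_two_mul_le (f := f) hp_self
  set u : ℕ → X := fun n => next^[n] y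
  have hu_succ : ∀ n, u (n + 1) = next (u n) := fun n => Function.iterate_succ_apply' next n y
  have hchain : ∀ n m, n ≤ m → u m ∈ descentSet f p (u n) := by
    intro n m hnm
    induction m, hnm using Nat.le_induction with
    | base => exact self_mem_descentSet hp_self _
    | succ m _ ih => rw [hu_succ]; exact descentSet_subset hp_triangle ih (hnext_mem _)
  obtain ⟨x, hx⟩ :=
    cauchySeq_tendsto_of_complete (cauchySeq_of_mem_descentSet hf_bdd hc hp_dist hchain)
  have hx_mem : ∀ n, x ∈ descentSet f p (u n) := fun n =>
    (isClosed_descentSet hf (hp_lsc _)).mem_of_tendsto hx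
      ((eventually_ge_atTop n).mono fun m hm => hchain n m hm)
  refine ⟨x, hx_mem 0, fun z => ?_⟩
  by_contra! hz
  have hbdd : BddBelow (range fun n => f (u n)) := hf_bdd.mono (range_comp_subset_range _ _)
  have hL := tendsto_atTop_ciInf (fun n m hnm => le_of_mem_descentSet hp (hchain n m hnm)) hbdd
  set L := ⨅ n, f (u n)
  -- `z` lies in every descent set of the sequence, so `f z` bounds the infima from below
  have hz_le : ∀ n, 2 * f (u (n + 1)) - f (u n) ≤ f z := fun n => by
    have h₁ := hnext_le (u n)
    have h₂ : ⨅ w : descentSet f p (u n), f w ≤ f z :=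
      ciInf_le (f := fun w : descentSet f p (u n) => f w)
        (hf_bdd.mono (range_comp_subset_range _ _))
        ⟨z, descentSet_subset hp_triangle (hx_mem n) hz.le⟩
    rw [← hu_succ] at h₁
    linarith
  have hLz := le_of_tendsto' (((hL.comp (tendsto_add_atTop_nat 1)).const_mul 2).sub hL) hz_le
  have hxL : f x ≤ L := le_ciInf fun n => le_of_mem_descentSet hp (hx_mem n)
  linarith [hp x z]

end Ekeland

section SupportFun

variable {E : Type*} [NormedAddCommGroup E] [NormedSpace ℝ E]

/-- A junk value where `sup_{k ∈ K} k x` is infinite. -/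
noncomputable def supportFun (K : Set (StrongDual ℝ E)) (x : E) : ℝ :=
  ⨆ k : K, (k : StrongDual ℝ E) x

variable {K : Set (StrongDual ℝ E)}

lemma le_supportFun {x : E} (hx : BddAbove (range fun k : K => (k : StrongDual ℝ E) x))
    {k : StrongDual ℝ E} (hk : k ∈ K) : k x ≤ supportFun K x :=
  le_ciSup (f := fun k : K => (k : StrongDual ℝ E) x) hx ⟨k, hk⟩

lemma supportFun_le (hK : K.Nonempty) {x : E} {b : ℝ} (h : ∀ k ∈ K, k x ≤ b) :
    supportFun K x ≤ b :=
  have := hK.to_subtype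
  ciSup_le fun k => h k k.2

lemma bddAbove_range_apply (hK : Bornology.IsBounded K) (x : E) :
    BddAbove (range fun k : K => (k : StrongDual ℝ E) x) := by
  obtain ⟨M, hM⟩ := isBounded_iff_forall_norm_le.1 hK
  refine ⟨M * ‖x‖, ?_⟩
  rintro _ ⟨k, rfl⟩
  exact (le_abs_self _).trans ((k : StrongDual ℝ E).le_of_opNorm_le (hM k k.2) x)

lemma supportFun_zero (hK : K.Nonempty) : supportFun K (0 : E) = 0 := by
  have := hK.to_subtype
  simp [supportFun]

lemma supportFun_smul_add_smul_le (hK : Bornology.IsBounded K) (hK' : K.Nonempty) {a b : ℝ}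
    (ha : 0 ≤ a) (hb : 0 ≤ b) (x y : E) :
    supportFun K (a • x + b • y) ≤ a * supportFun K x + b * supportFun K y :=
  supportFun_le hK' fun k hk => by
    rw [map_add, map_smul, map_smul, smul_eq_mul, smul_eq_mul]
    gcongr <;> exact le_supportFun (bddAbove_range_apply hK _) hk

lemma supportFun_add_le (hK : Bornology.IsBounded K) (hK' : K.Nonempty) (x y : E) :
    supportFun K (x + y) ≤ supportFun K x + supportFun K y := by
  simpa using supportFun_smul_add_smul_le hK hK' zero_le_one zero_le_one x y

lemma convexOn_supportFun (hK : Bornology.IsBounded K) (hK' : K.Nonempty) :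
    ConvexOn ℝ univ (supportFun K) :=
  ⟨convex_univ, fun x _ y _ _ _ ha hb _ => supportFun_smul_add_smul_le hK hK' ha hb x y⟩

lemma continuous_supportFun (hK : Bornology.IsBounded K) (hK' : K.Nonempty) :
    Continuous (supportFun K) := by
  obtain ⟨M, hM⟩ := isBounded_iff_forall_norm_le.1 hK
  refine (LipschitzWith.of_le_add_mul M.toNNReal fun x y =>
    supportFun_le hK' fun k hk => ?_).continuous
  have h₁ := le_supportFun (bddAbove_range_apply hK y) hk
  have h₂ : k (x - y) ≤ M.toNNReal * dist x y := by
    rw [dist_eq_norm]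
    exact (le_abs_self _).trans (k.le_of_opNorm_le ((hM k hk).trans (le_max_left _ _)) _)
  rw [map_sub] at h₂
  linarith

lemma mul_norm_le_supportFun (hK : Bornology.IsBounded K) {δ : ℝ} (hδ : 0 ≤ δ)
    (hball : Metric.closedBall 0 δ ⊆ K) (x : E) : δ * ‖x‖ ≤ supportFun K x := by
  obtain ⟨g, hg, hgx⟩ := exists_dual_vector'' ℝ x
  have hmem : δ • g ∈ K := hball (by
    rw [mem_closedBall_zero_iff, norm_smul, Real.norm_of_nonneg hδ]
    exact mul_le_of_le_one_right hδ hg)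
  have := le_supportFun (bddAbove_range_apply hK x) hmem
  simpa [hgx] using this

end SupportFun

section WeakStar

variable {E : Type*} [NormedAddCommGroup E] [NormedSpace ℝ E] {K : Set (StrongDual ℝ E)}

theorem mem_of_forall_apply_le (hK : IsClosed (StrongDual.toWeakDual '' K)) (hKc : Convex ℝ K)
    {v : StrongDual ℝ E} (hv : ∀ w b, (∀ k ∈ K, k w ≤ b) → v w ≤ b) : v ∈ K := by
  have : LocallyConvexSpace ℝ (WeakDual ℝ E) :=
    WeakBilin.locallyConvexSpace (B := topDualPairing ℝ E)
  by_contra hvK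
  obtain ⟨F, b, hFK, hFv⟩ := geometric_hahn_banach_closed_point
    (hKc.linear_image StrongDual.toWeakDual.toLinearMap) hK
    (fun ⟨k, hk, hkv⟩ => hvK (StrongDual.toWeakDual.injective hkv ▸ hk :))
  obtain ⟨w, rfl⟩ := LinearMap.dualEmbedding_surjective (topDualPairing ℝ E) F
  exact (hv w b fun k hk => (hFK _ ⟨k, hk, rfl⟩).le).not_gt hFv

/-- `hv` says `v (z - x) ≤ σ_K z - a` for all `z`, where `σ_K z` may be infinite. -/
theorem mem_and_le_of_forall_sub_le (hK : IsClosed (StrongDual.toWeakDual '' K))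
    (hKc : Convex ℝ K) {v : StrongDual ℝ E} {x : E} {a : ℝ}
    (hv : ∀ z b, (∀ k ∈ K, k z ≤ b) → v z - v x ≤ b - a) : v ∈ K ∧ a ≤ v x := by
  have hax : a ≤ v x := by simpa using hv 0 0 (by simp)
  refine ⟨mem_of_forall_apply_le hK hKc fun z b hzb => ?_, hax⟩
  by_contra! hlt
  have hpos : 0 < v z - b := by linarith
  set s := (v x - a + 1) / (v z - b)
  have hs : 0 < s := div_pos (by linarith) hpos
  have h := hv (s • z) (s * b) fun k hk => by
    rw [map_smul, smul_eq_mul]; exact mul_le_mul_of_nonneg_left (hzb k hk) hs.le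
  have hs' : s * (v z - b) = v x - a + 1 := div_mul_cancel₀ _ hpos.ne'
  rw [map_smul, smul_eq_mul] at h
  nlinarith

end WeakStar

theorem IsCompact.convexJoin {V : Type*} [AddCommGroup V] [Module ℝ V] [TopologicalSpace V]
    [ContinuousAdd V] [ContinuousSMul ℝ V] {s t : Set V} (hs : IsCompact s) (ht : IsCompact t) :
    IsCompact (_root_.convexJoin ℝ s t) := by
  have : _root_.convexJoin ℝ s t =
      (fun q : ℝ × V × V => (1 - q.1) • q.2.1 + q.1 • q.2.2) '' (Icc 0 1 ×ˢ s ×ˢ t) := by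
    ext v
    simp only [mem_convexJoin, segment_eq_image, mem_image, mem_prod, Prod.exists]
    constructor
    · rintro ⟨a, ha, b, hb, θ, hθ, rfl⟩
      exact ⟨θ, a, b, ⟨hθ, ha, hb⟩, rfl⟩
    · rintro ⟨θ, a, b, ⟨hθ, ha, hb⟩, rfl⟩
      exact ⟨a, ha, b, hb, θ, hθ, rfl⟩
  rw [this]
  exact (isCompact_Icc.prod (hs.prod ht)).image (by fun_prop)

theorem LinearMap.image_convexJoin {V W : Type*} [AddCommGroup V] [Module ℝ V] [AddCommGroup W]
    [Module ℝ W] (f : V →ₗ[ℝ] W) (s t : Set V) :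
    f '' convexJoin ℝ s t = convexJoin ℝ (f '' s) (f '' t) := by
  ext w
  simp only [mem_convexJoin, mem_image]
  constructor
  · rintro ⟨v, ⟨a, ha, b, hb, hv⟩, rfl⟩
    exact ⟨f a, ⟨a, ha, rfl⟩, f b, ⟨b, hb, rfl⟩, image_segment ℝ f.toAffineMap a b ▸ ⟨v, hv, rfl⟩⟩
  · rintro ⟨_, ⟨a, ha, rfl⟩, _, ⟨b, hb, rfl⟩, hw⟩
    obtain ⟨v, hv, rfl⟩ := (image_segment ℝ f.toAffineMap a b).symm ▸ hw
    exact ⟨v, ⟨a, ha, b, hb, hv⟩, rfl⟩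

section Sandwich

variable {E : Type*} [NormedAddCommGroup E] [NormedSpace ℝ E]

theorem exists_dual_between {φ : E → ℝ} (hφ : ConvexOn ℝ univ φ) (hφc : Continuous φ)
    (hφ0 : φ 0 = 0) {B : Set (E × ℝ)} (hB : Convex ℝ B) (h00 : (0, 0) ∈ B)
    (hφB : ∀ q ∈ B, -φ q.1 ≤ q.2) :
    ∃ ℓ : StrongDual ℝ E, (∀ w, -φ w ≤ ℓ w) ∧ ∀ q ∈ B, ℓ q.1 ≤ q.2 := by
  set A : Set (E × ℝ) := {q | q.1 ∈ univ ∧ q.2 < -φ q.1}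
  have hAo : IsOpen A := by
    simpa [A] using isOpen_lt continuous_snd (hφc.comp continuous_fst).neg
  have hdisj : Disjoint A B := Set.disjoint_left.2 fun q hqA hqB => (hφB q hqB).not_gt hqA.2
  obtain ⟨F, s, hFA, hFB⟩ := geometric_hahn_banach_open hφ.neg.convex_strict_hypograph hAo hB hdisj
  set β := F (0, 1)
  have hF : ∀ w t, F (w, t) = F (w, 0) + t * β := fun w t => by
    rw [← smul_eq_mul, ← map_smul, ← map_add]; simp
  have hs_nonpos : s ≤ 0 := by
    have := hFB _ h00
    rwa [Prod.mk_zero_zero, map_zero] at this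
  have hβ : 0 < β := by
    have := hFA (0, -1) ⟨trivial, by simp [hφ0]⟩
    rw [hF, Prod.mk_zero_zero, map_zero] at this
    linarith
  have hs_nonneg : 0 ≤ s := by
    by_contra! hs
    have := hFA (0, s / β) ⟨trivial, by simpa [hφ0] using div_neg_of_neg_of_pos hs hβ⟩
    rw [hF, div_mul_cancel₀ _ hβ.ne', Prod.mk_zero_zero, map_zero] at this
    linarith
  have hℓ : ∀ w, (-β⁻¹ • F.comp (ContinuousLinearMap.inl ℝ E ℝ)) w = -(F (w, 0) / β) := fun w => by
    simp [div_eq_inv_mul]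
  refine ⟨-β⁻¹ • F.comp (ContinuousLinearMap.inl ℝ E ℝ), fun w => ?_, fun q hq => ?_⟩
  · by_contra! hw
    rw [hℓ] at hw
    have := hFA (w, -(F (w, 0) / β)) ⟨trivial, hw⟩
    rw [hF, neg_mul, div_mul_cancel₀ _ hβ.ne'] at this
    linarith
  · have := hFB q hq
    rw [← Prod.mk.eta (p := q), hF] at this
    rw [hℓ, neg_le, le_div_iff₀ hβ]
    linarith

end Sandwich

section Core

variable {E : Type*} [NormedAddCommGroup E] [NormedSpace ℝ E] [CompleteSpace E]
  {C : Set (StrongDual ℝ E)} {c₀ : StrongDual ℝ E}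

theorem exists_ekeland_supportFun_sub (hc₀ : c₀ ∈ C) {ρ : E → ℝ} (hρ0 : ρ 0 = 0)
    (hρ_add : ∀ v w, ρ (v + w) ≤ ρ v + ρ w) {δ : ℝ} (hδ : 0 < δ) (hρδ : ∀ w, δ * ‖w‖ ≤ ρ w)
    (hρc : Continuous ρ) {y : E} {r : ℝ} (hy : ∀ c ∈ C, c y ≤ r) :
    ∃ x, BddAbove (range fun c : C => (c : StrongDual ℝ E) x) ∧ ρ (x - y) ≤ r - c₀ y ∧
      ∀ z, BddAbove (range fun c : C => (c : StrongDual ℝ E) z) →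
        supportFun C x - c₀ x ≤ supportFun C z - c₀ z + ρ (z - x) := by
  -- `σ_C - c₀` is finite and lower semicontinuous on the closed sublevel set `S`, and the
  -- Ekeland inequality is automatic outside `S`.
  set S := {z : E | ∀ c ∈ C, c z - c₀ z ≤ r - c₀ y}
  have hS : IsClosed S := by
    simp only [S, ofPred_forall]
    exact isClosed_iInter fun c => isClosed_iInter fun _ => isClosed_le (by fun_prop) (by fun_prop)
  have : CompleteSpace S := hS.completeSpace_coe
  have hbdd : ∀ z ∈ S, BddAbove (range fun c : C => (c : StrongDual ℝ E) z) := fun z hz =>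
    ⟨c₀ z + (r - c₀ y), by rintro _ ⟨c, rfl⟩; linarith [hz c c.2]⟩
  have hρ_nonneg : ∀ w, 0 ≤ ρ w := fun w => (mul_nonneg hδ.le (norm_nonneg w)).trans (hρδ w)
  set F : S → ℝ := fun z => supportFun C z - c₀ z
  have hF_nonneg : ∀ z, 0 ≤ F z := fun z => sub_nonneg.2 (le_supportFun (hbdd z z.2) hc₀)
  have hF_lsc : LowerSemicontinuous F := by
    have hσ : LowerSemicontinuous fun z : S => supportFun C z :=
      lowerSemicontinuous_ciSup (fun z => hbdd z z.2) fun c =>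
        (c.1.continuous.comp continuous_subtype_val).lowerSemicontinuous
    have hF : F = fun z : S => supportFun C z + -c₀ z := funext fun z => sub_eq_add_neg _ _
    rw [hF]
    exact hσ.add (by fun_prop : Continuous fun z : S => -c₀ z).lowerSemicontinuous
  obtain ⟨x, hxy, hx⟩ := hF_lsc.exists_ekeland (p := fun x z : S => ρ (z - x))
    ⟨0, by rintro _ ⟨z, rfl⟩; exact hF_nonneg z⟩ (fun x => by simp [hρ0])
    (fun x x' z => by simpa only [sub_add_sub_cancel'] using hρ_add (x' - x) (z - x'))
    hδ (fun x z => by rw [Subtype.dist_eq, dist_eq_norm, norm_sub_rev]; exact hρδ _)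
    (fun x => (hρc.comp (continuous_subtype_val.sub continuous_const)).lowerSemicontinuous)
    ⟨y, fun c hc => by linarith [hy c hc]⟩
  have hFy : F ⟨y, fun c hc => by linarith [hy c hc]⟩ ≤ r - c₀ y :=
    sub_le_sub_right (supportFun_le ⟨c₀, hc₀⟩ hy) _
  refine ⟨x, hbdd x x.2, by linarith [hF_nonneg x], fun z hz => ?_⟩
  by_cases hzS : z ∈ S
  · exact hx ⟨z, hzS⟩
  · obtain ⟨c, hc, hcz⟩ : ∃ c ∈ C, r - c₀ y < c z - c₀ z := by
      simpa [S, lt_sub_iff_add_lt] using hzS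
    have := le_supportFun hz hc
    linarith [hρ_nonneg (z - x), hρ_nonneg (x - y)]

theorem exists_support_point_sub_mem (hCcl : IsClosed (StrongDual.toWeakDual '' C))
    (hCconv : Convex ℝ C) (hc₀ : c₀ ∈ C) {J : Set (StrongDual ℝ E)}
    (hJcl : IsClosed (StrongDual.toWeakDual '' J)) (hJconv : Convex ℝ J)
    (hJb : Bornology.IsBounded J) {δ : ℝ} (hδ : 0 < δ) (hball : Metric.closedBall 0 δ ⊆ J)
    {y : E} {r : ℝ} (hy : ∀ c ∈ C, c y ≤ r) :
    ∃ x, ∃ ℓ ∈ C, (∀ z ∈ C, z x ≤ ℓ x) ∧ c₀ - ℓ ∈ J ∧ supportFun J (x - y) ≤ r - c₀ y := by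
  have hJne : J.Nonempty := ⟨0, hball (Metric.mem_closedBall_self hδ.le)⟩
  obtain ⟨x, hxb, hxy, hx⟩ := exists_ekeland_supportFun_sub hc₀ (supportFun_zero hJne)
    (supportFun_add_le hJb hJne) hδ (mul_norm_le_supportFun hJb hδ.le hball)
    (continuous_supportFun hJb hJne) hy
  -- the epigraph of `σ_C (x + ·) - c₀ - σ_C x`
  set B : Set (E × ℝ) := {q | ∀ c ∈ C, c (x + q.1) - c₀ q.1 ≤ supportFun C x + q.2}
  have hB : Convex ℝ B := fun q₁ hq₁ q₂ hq₂ a b ha hb hab c hc => by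
    have h₁ := mul_le_mul_of_nonneg_left (hq₁ c hc) ha
    have h₂ := mul_le_mul_of_nonneg_left (hq₂ c hc) hb
    simp only [Prod.fst_add, Prod.snd_add, Prod.smul_fst, Prod.smul_snd, smul_eq_mul, map_add,
      map_smul] at h₁ h₂ ⊢
    have hx' : c x = a * c x + b * c x := by rw [← add_mul, hab, one_mul]
    have hσ : supportFun C x = a * supportFun C x + b * supportFun C x := by
      rw [← add_mul, hab, one_mul]
    linarith
  have h00 : ((0 : E), (0 : ℝ)) ∈ B := fun c hc => by simpa using le_supportFun hxb hc
  have hρB : ∀ q ∈ B, -supportFun J q.1 ≤ q.2 := fun q hq => by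
    have hq' : ∀ c ∈ C, c (x + q.1) ≤ supportFun C x + q.2 + c₀ q.1 := fun c hc => by
      linarith [hq c hc]
    have h₁ := hx _ ⟨_, by rintro _ ⟨c, rfl⟩; exact hq' c c.2⟩
    have h₂ := supportFun_le ⟨c₀, hc₀⟩ hq'
    rw [add_sub_cancel_left, map_add] at h₁
    linarith
  obtain ⟨ℓ, hℓJ, hℓB⟩ := exists_dual_between (convexOn_supportFun hJb hJne)
    (continuous_supportFun hJb hJne) (supportFun_zero hJne) hB h00 hρB
  obtain ⟨hℓC, hℓx⟩ := mem_and_le_of_forall_sub_le hCcl hCconv (v := c₀ + ℓ) (x := x)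
    (a := supportFun C x) fun z b hzb => by
      have := hℓB (z - x, b - c₀ (z - x) - supportFun C x) fun c hc => by
        simp only [add_sub_cancel]
        linarith [hzb c hc]
      simp only [map_sub, add_apply] at this ⊢
      linarith
  refine ⟨x, c₀ + ℓ, hℓC, fun z hz => (le_supportFun hxb hz).trans hℓx, ?_, hxy⟩
  refine mem_of_forall_apply_le hJcl hJconv fun w b hwb => ?_
  have := supportFun_le hJne hwb
  simp only [sub_apply, add_apply]
  linarith [hℓJ w]

end Core

section Gauge

variable {E : Type*} [NormedAddCommGroup E] [NormedSpace ℝ E] {D : Set (StrongDual ℝ E)}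

theorem isClosed_toWeakDual_image_convexJoin (hDcl : IsClosed (StrongDual.toWeakDual '' D))
    (hDb : Bornology.IsBounded D) (κ δ : ℝ) :
    IsClosed (StrongDual.toWeakDual '' convexJoin ℝ (κ • D) (Metric.closedBall 0 δ)) := by
  have hD : IsCompact (StrongDual.toWeakDual '' D) := by
    refine WeakDual.isCompact_of_bounded_of_closed ?_ hDcl
    rwa [← WeakDual.isBounded_toWeakDual_preimage_iff_isBounded,
      preimage_image_eq _ StrongDual.toWeakDual.injective]
  have hball : IsCompact (StrongDual.toWeakDual '' Metric.closedBall (0 : StrongDual ℝ E) δ) := by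
    rw [LinearEquiv.image_eq_preimage_symm]
    exact WeakDual.isCompact_closedBall 0 δ
  have := LinearMap.image_convexJoin StrongDual.toWeakDual.toLinearMap (κ • D)
    (Metric.closedBall 0 δ)
  simp only [LinearEquiv.coe_coe, image_smul_set] at this
  rw [this]
  exact ((hD.smul κ).convexJoin hball).isClosed

theorem isBounded_convexJoin (hDb : Bornology.IsBounded D) (κ δ : ℝ) :
    Bornology.IsBounded (convexJoin ℝ (κ • D) (Metric.closedBall 0 δ)) :=
  (isBounded_convexHull.2 ((hDb.smul₀ κ).union Metric.isBounded_closedBall)).subset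
    (convexJoin_subset_convexHull _ _)

theorem exists_norm_sub_smul_le_of_mem_convexJoin {κ δ : ℝ} (hκ : 0 ≤ κ) {c : StrongDual ℝ E}
    (hc : c ∈ convexJoin ℝ (κ • D) (Metric.closedBall 0 δ)) :
    ∃ l : ℝ, 0 ≤ l ∧ ∃ d ∈ D, ‖c - l • d‖ ≤ δ := by
  obtain ⟨_, ⟨d, hd, rfl⟩, v, hv, a, b, ha, hb, hab, rfl⟩ := mem_convexJoin.1 hc
  refine ⟨a * κ, by positivity, d, hd, ?_⟩
  rw [mul_smul, add_sub_cancel_left, norm_smul, Real.norm_of_nonneg hb]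
  exact (mul_le_of_le_one_left (norm_nonneg v) (by linarith)).trans (mem_closedBall_zero_iff.1 hv)

theorem mem_LD_of_supportFun_le {J : Set (StrongDual ℝ E)} (hJb : Bornology.IsBounded J)
    {κ : ℝ} (hκ : 0 < κ) (hDJ : κ • D ⊆ J) {x y : E} {s : ℝ} (hDy : ∀ d ∈ D, d y ≤ s)
    (hxy : κ * s + supportFun J (x - y) < 0) : x ∈ LD D := by
  refine ⟨(κ * s + supportFun J (x - y)) / κ, div_neg_of_neg_of_pos hxy hκ, fun d hd => ?_⟩
  have h₁ := le_supportFun (bddAbove_range_apply hJb (x - y)) (hDJ (smul_mem_smul_set hd))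
  have h₂ := mul_le_mul_of_nonneg_left (hDy d hd) hκ.le
  rw [le_div_iff₀ hκ]
  simp only [smul_apply, map_sub, smul_eq_mul] at h₁
  linarith

lemma smul_mem_lambdaD {d : StrongDual ℝ E} (hd : d ∈ D) {l : ℝ} (hl : 0 ≤ l) :
    l • d ∈ LambdaD D := by
  rcases hl.eq_or_lt with rfl | hl
  · left; simp
  · exact Or.inr ⟨l, hl, d, hd, rfl⟩

end Gauge

/-- One-side Bishop–Phelps theorem: if `C`, `D` are weak*-closed convex subsets of `E*`,
`D` nonempty and bounded, and some `y ∈ L_D` has `sup(y, C) < +∞`, then the set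
`Σ_C^D` of points of `C` where some `x ∈ L_D` attains its supremum over `C` satisfies
`C ⊆ norm-closure(Σ_C^D + Λ_D)`. -/
theorem one_side_bishop_phelps
    {E : Type*} [NormedAddCommGroup E] [NormedSpace ℝ E] [CompleteSpace E]
    (C D : Set (StrongDual ℝ E))
    (hCcl : IsClosed (StrongDual.toWeakDual '' C)) (hCconv : Convex ℝ C)
    (hDcl : IsClosed (StrongDual.toWeakDual '' D)) (hDconv : Convex ℝ D)
    (hDne : D.Nonempty) (hDb : Bornology.IsBounded D)
    (hy : ∃ y ∈ LD D, ∃ r : ℝ, ∀ c ∈ C, c y ≤ r) :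
    C ⊆ closure ({c ∈ C | ∃ x ∈ LD D, ∀ z ∈ C, z x ≤ c x} + LambdaD D) := by
  intro c₀ hc₀
  refine Metric.mem_closure_iff.2 fun ε hε => ?_
  obtain ⟨y, ⟨s, hs, hDy⟩, r, hr⟩ := hy
  set κ := (r - c₀ y + 1) / -s
  have hκ : 0 < κ := div_pos (by linarith [hr c₀ hc₀]) (by linarith)
  have hκs : κ * s = -(r - c₀ y + 1) := by
    rw [← neg_neg s, mul_neg, div_mul_cancel₀ _ (by linarith)]
  set J := convexJoin ℝ (κ • D) (Metric.closedBall 0 (ε / 2))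
  have hJb : Bornology.IsBounded J := isBounded_convexJoin hDb κ _
  obtain ⟨x, ℓ, hℓC, hℓx, hℓJ, hxy⟩ := exists_support_point_sub_mem hCcl hCconv hc₀
    (isClosed_toWeakDual_image_convexJoin hDcl hDb κ _)
    ((hDconv.smul κ).convexJoin (convex_closedBall 0 _)) hJb (half_pos hε)
    (subset_convexJoin_right hDne.smul_set) hr
  have hx : x ∈ LD D := mem_LD_of_supportFun_le hJb hκ
    (subset_convexJoin_left (Metric.nonempty_closedBall.2 (by positivity))) hDy (by linarith)
  obtain ⟨l, hl, d, hd, hld⟩ := exists_norm_sub_smul_le_of_mem_convexJoin hκ.le hℓJ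
  refine ⟨ℓ + l • d, add_mem_add ⟨hℓC, x, hx, hℓx⟩ (smul_mem_lambdaD hd hl), ?_⟩
  rw [dist_eq_norm, ← sub_sub]
  linarith
end

section
/- Let E be a real Banach space, D ⊆ E* a nonempty weak*-compact convex set with 0 ∉ D, C ⊆ E* a weak*-closed convex set such that every x ∈ L_D has finite supremum on C, and B ⊆ C. Suppose that for every covering B ⊆ ∪_{n=1}^∞ K_n by an increasing sequence of weak*-compact convex subsets K_n ⊆ C one has C ⊆ norm-closure(∪_{n=1}^∞ K_n + Λ_D). Then for every bounded sequence (x_n) in L_D, sup_{b* ∈ B} (limsup_n ⟨x_n,b*⟩) = sup_{c* ∈ C} (limsup_n ⟨x_n,c*⟩). -/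
open Filter Topology Pointwise

/-! Let `α` be the supremum over `B` and `r > α` real. The sets
`Kₙ = {z ∈ C : ‖z‖ ≤ n, z (x m) ≤ r for m ≥ n}` increase, are convex and weak*-compact
(Banach–Alaoglu), and cover `B`. Every element of `⋃ Kₙ + Λ_D` is eventually `≤ r` along `(x m)`,
since functionals in `Λ_D` are nonpositive on `L_D`. As `(x m)` is bounded, `c ↦ limsup c (x m)`
is norm-Lipschitz, so the bound passes to the norm closure, which contains `C`. -/

section

variable {E : Type*} [NormedAddCommGroup E] [NormedSpace ℝ E]

lemma LambdaD_apply_nonpos {D : Set (StrongDual ℝ E)} {w : StrongDual ℝ E}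
    (hw : w ∈ LambdaD D) {x : E} (hx : x ∈ LD D) : w x ≤ 0 := by
  rcases hw with rfl | ⟨l, hl, d, hd, rfl⟩
  · simp
  · obtain ⟨r, hr, hdr⟩ := hx
    have : d x ≤ 0 := (hdr d hd).trans hr.le
    simpa using mul_nonpos_of_nonneg_of_nonpos hl.le this

lemma isBounded_range_apply {ι : Type*} {x : ι → E} (hx : Bornology.IsBounded (Set.range x))
    (c : StrongDual ℝ E) : Bornology.IsBounded (Set.range fun i => c (x i)) := by
  rw [← Function.comp_def, Set.range_comp]
  exact c.lipschitz.isBounded_image hx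

lemma limsup_apply_le_of_mem_closure {ι : Type*} {l : Filter ι} [l.NeBot] {x : ι → E}
    (hx : Bornology.IsBounded (Set.range x)) {S : Set (StrongDual ℝ E)} {a : ℝ}
    (hS : ∀ z ∈ S, ∀ᶠ i in l, z (x i) ≤ a) {c : StrongDual ℝ E} (hc : c ∈ closure S) :
    limsup (fun i => c (x i)) l ≤ a := by
  obtain ⟨R, hR, hxR⟩ := hx.exists_pos_norm_le
  have hxR' : ∀ i, ‖x i‖ ≤ R := fun i => hxR _ (Set.mem_range_self i)
  have hcobdd : IsCoboundedUnder (· ≤ ·) l (fun i => c (x i)) :=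
    (isBounded_range_apply hx c).bddBelow.isBoundedUnder_of_range.isCoboundedUnder_le
  refine le_of_forall_pos_le_add fun δ hδ => ?_
  obtain ⟨z, hzS, hcz⟩ := Metric.mem_closure_iff.mp hc (δ / R) (by positivity)
  refine limsup_le_of_le hcobdd ((hS z hzS).mono fun i hi => ?_)
  have hdiff : (c - z) (x i) ≤ δ :=
    calc (c - z) (x i) ≤ ‖c - z‖ * ‖x i‖ := (le_abs_self _).trans ((c - z).le_opNorm (x i))
      _ ≤ δ / R * R := by
        rw [← dist_eq_norm]
        exact mul_le_mul hcz.le (hxR' i) (norm_nonneg _) (by positivity)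
      _ = δ := div_mul_cancel₀ δ hR.ne'
  have : c (x i) = z (x i) + (c - z) (x i) := by simp
  linarith

def tailSublevel (C : Set (StrongDual ℝ E)) (x : ℕ → E) (a : ℝ) (n : ℕ) :
    Set (StrongDual ℝ E) :=
  C ∩ Metric.closedBall 0 n ∩ ⋂ m ≥ n, {z | z (x m) ≤ a}

variable {C : Set (StrongDual ℝ E)} {x : ℕ → E} {a : ℝ}

lemma tailSublevel_subset (n : ℕ) : tailSublevel C x a n ⊆ C :=
  fun _ hz => hz.1.1

lemma monotone_tailSublevel : Monotone (tailSublevel C x a) := by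
  intro p q hpq z ⟨⟨hzC, hzn⟩, hzx⟩
  exact ⟨⟨hzC, Metric.closedBall_subset_closedBall (mod_cast hpq) hzn⟩,
    Set.mem_iInter₂.mpr fun m hm => Set.mem_iInter₂.mp hzx m (hpq.trans hm)⟩

lemma convex_tailSublevel (hC : Convex ℝ C) (n : ℕ) : Convex ℝ (tailSublevel C x a n) :=
  (hC.inter (convex_closedBall 0 n)).inter <| convex_iInter₂ fun m _ =>
    convex_halfSpace_le (ContinuousLinearMap.apply ℝ ℝ (x m)).isLinear a

lemma isCompact_toWeakDual_image_tailSublevel (hC : IsClosed (StrongDual.toWeakDual '' C))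
    (n : ℕ) : IsCompact (StrongDual.toWeakDual '' tailSublevel C x a n) := by
  rw [LinearEquiv.image_eq_preimage_symm]
  refine (WeakDual.isCompact_closedBall (𝕜 := ℝ) 0 n).of_isClosed_subset ?_
    fun w hw => hw.1.2
  rw [LinearEquiv.image_eq_preimage_symm] at hC
  -- `toWeakDual` is the identity on elements, so the preimage splits into weak*-closed pieces.
  refine (hC.inter (WeakDual.isClosed_closedBall 0 n)).inter ?_
  exact isClosed_biInter fun m _ => isClosed_le (WeakDual.eval_continuous (x m)) continuous_const

lemma mem_iUnion_tailSublevel {b : StrongDual ℝ E} (hbC : b ∈ C)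
    (hx : Bornology.IsBounded (Set.range x)) (hb : limsup (fun m => b (x m)) atTop < a) :
    b ∈ ⋃ n, tailSublevel C x a n := by
  obtain ⟨N, hN⟩ := eventually_atTop.mp <|
    eventually_lt_of_limsup_lt hb (isBounded_range_apply hx b).bddAbove.isBoundedUnder_of_range
  refine Set.mem_iUnion.mpr ⟨max N ⌈‖b‖⌉₊, ⟨hbC, ?_⟩, ?_⟩
  · rw [mem_closedBall_zero_iff]
    exact (Nat.le_ceil _).trans (mod_cast le_max_right N _)
  · exact Set.mem_iInter₂.mpr fun m hm => (hN m ((le_max_left _ _).trans hm)).le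

lemma eventually_apply_le_of_mem_iUnion_tailSublevel_add_LambdaD {D : Set (StrongDual ℝ E)}
    (hx : ∀ m, x m ∈ LD D) {z : StrongDual ℝ E}
    (hz : z ∈ (⋃ n, tailSublevel C x a n) + LambdaD D) : ∀ᶠ m in atTop, z (x m) ≤ a := by
  obtain ⟨u, hu, w, hw, rfl⟩ := hz
  obtain ⟨n, hn⟩ := Set.mem_iUnion.mp hu
  filter_upwards [eventually_ge_atTop n] with m hm
  have hum : u (x m) ≤ a := Set.mem_iInter₂.mp hn.2 m hm
  have := LambdaD_apply_nonpos hw (hx m)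
  change u (x m) + w (x m) ≤ a
  linarith

end

theorem one_side_I_generation_implies_sup_limsup_general
    {E : Type*} [NormedAddCommGroup E] [NormedSpace ℝ E]
    (D : Set (StrongDual ℝ E))
    (C : Set (StrongDual ℝ E))
    (hCcl : IsClosed (StrongDual.toWeakDual '' C)) (hCconv : Convex ℝ C)
    (B : Set (StrongDual ℝ E)) (hBC : B ⊆ C)
    (hgen : ∀ K : ℕ → Set (StrongDual ℝ E), Monotone K →
      (∀ n, IsCompact (StrongDual.toWeakDual '' K n)) →
      (∀ n, Convex ℝ (K n)) → (∀ n, K n ⊆ C) → B ⊆ ⋃ n, K n →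
      C ⊆ closure ((⋃ n, K n) + LambdaD D)) :
    ∀ x : ℕ → E, (∀ n, x n ∈ LD D) → Bornology.IsBounded (Set.range x) →
      (⨆ b ∈ B, ((Filter.limsup (fun n => b (x n)) atTop : ℝ) : EReal)) =
        ⨆ c ∈ C, ((Filter.limsup (fun n => c (x n)) atTop : ℝ) : EReal) := by
  intro x hx hbd
  refine le_antisymm (biSup_mono fun b hb => hBC hb) ?_
  refine EReal.le_of_forall_lt_iff_le.mp fun r hr => iSup₂_le fun c hc => ?_
  have hcover : B ⊆ ⋃ n, tailSublevel C x r n := fun b hb =>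
    mem_iUnion_tailSublevel (hBC hb) hbd (mod_cast (le_biSup _ hb).trans_lt hr)
  have hcl := hgen _ monotone_tailSublevel (isCompact_toWeakDual_image_tailSublevel hCcl)
    (convex_tailSublevel hCconv) tailSublevel_subset hcover hc
  exact mod_cast limsup_apply_le_of_mem_closure hbd
    (fun z hz => eventually_apply_le_of_mem_iUnion_tailSublevel_add_LambdaD hx hz) hcl

/-- (i) ⇒ (ii) of the equivalence between one-side (I)-generation and Simons' equality:
if for every covering of `B` by an increasing sequence of weak*-compact convex subsets
`Kₙ ⊆ C` one has `C ⊆ norm-closure(⋃ₙ Kₙ + Λ_D)`, then for every bounded sequence `(xₙ)`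
in `L_D` the sup over `B` of `limsupₙ ⟨xₙ, ·⟩` equals the corresponding sup over `C`. -/
theorem one_side_I_generation_implies_sup_limsup
    {E : Type*} [NormedAddCommGroup E] [NormedSpace ℝ E] [CompleteSpace E]
    (D : Set (StrongDual ℝ E)) (hDne : D.Nonempty)
    (hDcpt : IsCompact (StrongDual.toWeakDual '' D)) (hDconv : Convex ℝ D)
    (hD0 : (0 : StrongDual ℝ E) ∉ D)
    (C : Set (StrongDual ℝ E))
    (hCcl : IsClosed (StrongDual.toWeakDual '' C)) (hCconv : Convex ℝ C)
    (hfin : ∀ x ∈ LD D, ∃ r : ℝ, IsLUB ((fun c : StrongDual ℝ E => c x) '' C) r)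
    (B : Set (StrongDual ℝ E)) (hBC : B ⊆ C)
    (hgen : ∀ K : ℕ → Set (StrongDual ℝ E), Monotone K →
      (∀ n, IsCompact (StrongDual.toWeakDual '' K n)) →
      (∀ n, Convex ℝ (K n)) → (∀ n, K n ⊆ C) → B ⊆ ⋃ n, K n →
      C ⊆ closure ((⋃ n, K n) + LambdaD D)) :
    ∀ x : ℕ → E, (∀ n, x n ∈ LD D) → Bornology.IsBounded (Set.range x) →
      (⨆ b ∈ B, ((Filter.limsup (fun n => b (x n)) atTop : ℝ) : EReal)) =
        ⨆ c ∈ C, ((Filter.limsup (fun n => c (x n)) atTop : ℝ) : EReal) :=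
  one_side_I_generation_implies_sup_limsup_general D C hCcl hCconv B hBC hgen
end

section
/- Let E be a real Banach space, D ⊆ E* a nonempty weak*-compact convex set with 0 ∉ D, C ⊆ E* a weak*-closed convex set such that every x ∈ L_D has finite supremum on C, and B ⊆ C. Suppose that for every bounded sequence (x_n) in L_D one has sup_{b* ∈ B} (limsup_n ⟨x_n,b*⟩) = sup_{c* ∈ C} (limsup_n ⟨x_n,c*⟩). Then for every bounded sequence (x_n) in L_D, sup_{b* ∈ B} (limsup_n ⟨x_n,b*⟩) ≥ inf{ sup_{c* ∈ C} ⟨c*,x⟩ : x ∈ co_{σp}{x_n : n ≥ 1} }. -/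
open Filter Topology Pointwise

/-- `co_{σp}{xₙ : n ≥ 1}`: the set of all norm-convergent sums `Σₙ λₙ xₙ` with `λₙ ≥ 0`
and `Σₙ λₙ = 1`. -/
def coSigmaP {E : Type*} [NormedAddCommGroup E] [NormedSpace ℝ E] (x : ℕ → E) : Set E :=
  {y | ∃ lam : ℕ → ℝ, (∀ n, 0 ≤ lam n) ∧
    Tendsto (fun N => ∑ n ∈ Finset.range N, lam n) atTop (𝓝 1) ∧
    Tendsto (fun N => ∑ n ∈ Finset.range N, lam n • x n) atTop (𝓝 y)}

/-
Simons' argument. Write `s(y) = sup_{c ∈ C} c y`. On `L_D` this supremum is attained: `L_D` is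
open (as `D` is norm bounded) and the evaluations of `C` are bounded above on it, so by
Banach–Steinhaus every superlevel set `{c ∈ C | t ≤ c y}` is norm bounded, hence weak-* compact.

Given `ε > 0`, let `Wₙ` be the σ-convex hull of the tail `{x k | k ≥ n}` and choose greedily
`Yₙ ∈ Wₙ` such that `s(hₙ + 2⁻ⁿ Yₙ)` is within `ε 4⁻ⁿ / 2` of its infimum over `Wₙ`, where
`hₙ = Σ_{k<n} 2^{-(k+1)} Yₖ`. Let `z = Σₖ 2^{-(k+1)} Yₖ` and let `c ∈ C` attain `s(z)`. The
normalised tails `Tₙ = Σₖ 2^{-(k+1)} Y_{n+k} ∈ Wₙ` satisfy `z = hₙ + 2⁻ⁿ Tₙ`, so testing the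
choice of `Yₙ` against `Tₙ` gives `c Yₙ ≤ c Tₙ + ε 2⁻ⁿ / 2`, and `Tₙ = (Yₙ + Tₙ₊₁) / 2` turns this
into `c Tₙ ≥ s(z) - ε`. Since `Tₙ` averages the `x k` with `k ≥ n`, `limsup c (x k) ≥ s(z) - ε`.
The hypothesis then transfers this inequality from `C` to `B`.
-/

open Set Bornology

lemma exists_forall_le_add_of_bddBelow {α : Type*} {S : Set α} (hS : S.Nonempty) {f : α → ℝ}
    (hf : BddBelow (f '' S)) {η : ℝ} (hη : 0 < η) : ∃ y ∈ S, ∀ y' ∈ S, f y ≤ f y' + η := by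
  obtain ⟨_, ⟨y, hy, rfl⟩, hlt⟩ :=
    exists_lt_of_csInf_lt (hS.image f) (lt_add_of_pos_right (sInf (f '' S)) hη)
  exact ⟨y, hy, fun y' hy' => by linarith [csInf_le hf ⟨y', hy', rfl⟩]⟩

lemma hasSum_cols_of_hasSum_rows {α β γ : Type*} [NormedAddCommGroup α] [CompleteSpace α]
    {f : β × γ → α} (hf : Summable f) {g : β → α} {h : γ → α}
    (hg : ∀ b, HasSum (fun c => f (b, c)) (g b)) (hh : ∀ c, HasSum (fun b => f (b, c)) (h c))
    {a : α} (ha : HasSum g a) : HasSum h a := by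
  have hfa : HasSum f a := (ha.unique (hf.hasSum.prod_fiberwise hg)) ▸ hf.hasSum
  exact ((Equiv.prodComm γ β).hasSum_iff.2 hfa).prod_fiberwise hh

lemma hasSum_half_pow_succ : HasSum (fun k : ℕ => (1 / 2 : ℝ) ^ (k + 1)) 1 := by
  simpa [pow_succ'] using hasSum_geometric_two.mul_left (1 / 2 : ℝ)

section Greedy

variable {E : Type*} [AddCommGroup E] [Module ℝ E]

lemma exists_greedy_dyadic_seq {W : ℕ → Set E} (hW : Antitone W) (hW₀ : Convex ℝ (W 0))
    (hne : ∀ n, (W n).Nonempty) {f : E → ℝ} (hf : BddBelow (f '' W 0)) {η : ℕ → ℝ}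
    (hη : ∀ n, 0 < η n) :
    ∃ Y h : ℕ → E, (∀ n, Y n ∈ W n) ∧ h 0 = 0 ∧
      (∀ n, h (n + 1) = h n + (1 / 2 : ℝ) ^ (n + 1) • Y n) ∧
      (∀ n, ∀ y ∈ W 0, h n + (1 / 2 : ℝ) ^ n • y ∈ W 0) ∧
      ∀ n, ∀ y ∈ W n, f (h n + (1 / 2 : ℝ) ^ n • Y n) ≤ f (h n + (1 / 2 : ℝ) ^ n • y) + η n := by
  have step : ∀ n (a : E), ∃ y ∈ W n, (∀ y' ∈ W n, a + (1 / 2 : ℝ) ^ n • y' ∈ W 0) →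
      ∀ y' ∈ W n, f (a + (1 / 2 : ℝ) ^ n • y) ≤ f (a + (1 / 2 : ℝ) ^ n • y') + η n := by
    intro n a
    by_cases ha : ∀ y' ∈ W n, a + (1 / 2 : ℝ) ^ n • y' ∈ W 0
    · obtain ⟨y, hy, hmin⟩ := exists_forall_le_add_of_bddBelow (hne n)
        (f := fun y => f (a + (1 / 2 : ℝ) ^ n • y))
        (hf.mono (by rintro _ ⟨y, hy, rfl⟩; exact ⟨_, ha y hy, rfl⟩)) (hη n)
      exact ⟨y, hy, fun _ => hmin⟩
    · obtain ⟨y, hy⟩ := hne n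
      exact ⟨y, hy, fun h => absurd h ha⟩
  choose next hnext hopt using step
  let h : ℕ → E := fun n => Nat.rec 0 (fun n a => a + (1 / 2 : ℝ) ^ (n + 1) • next n a) n
  have hmem : ∀ n, ∀ y ∈ W 0, h n + (1 / 2 : ℝ) ^ n • y ∈ W 0 := by
    intro n
    induction n with
    | zero => simp [h]
    | succ n ih =>
      intro y hy
      have hmid : (1 / 2 : ℝ) • next n (h n) + (1 / 2 : ℝ) • y ∈ W 0 :=
        hW₀ (hW (Nat.zero_le n) (hnext n (h n))) hy (by norm_num) (by norm_num) (by norm_num)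
      convert ih _ hmid using 1
      simp only [h, pow_succ, smul_add, smul_smul, add_assoc]
  exact ⟨fun n => next n (h n), h, fun n => hnext n (h n), rfl, fun n => rfl, hmem,
    fun n => hopt n (h n) fun y hy => hmem n y (hW (Nat.zero_le n) hy)⟩

lemma add_half_pow_smul_eq {Y h T : ℕ → E} (h0 : h 0 = 0)
    (hsucc : ∀ n, h (n + 1) = h n + (1 / 2 : ℝ) ^ (n + 1) • Y n)
    (hT : ∀ n, T n = (1 / 2 : ℝ) • Y n + (1 / 2 : ℝ) • T (n + 1)) (n : ℕ) :
    h n + (1 / 2 : ℝ) ^ n • T n = T 0 := by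
  induction n with
  | zero => simp [h0]
  | succ n ih => rw [← ih, hT n, hsucc, pow_succ, smul_add, mul_smul, mul_smul, add_assoc]

end Greedy

section CoSigmaTail

variable {E : Type*} [NormedAddCommGroup E] [NormedSpace ℝ E] {x : ℕ → E}

/-- `co_σ{x k | k ≥ n}`, with the series summed unconditionally. -/
def coSigmaTail (x : ℕ → E) (n : ℕ) : Set E :=
  {y | ∃ lam : ℕ → ℝ, (∀ i, 0 ≤ lam i) ∧ (∀ i < n, lam i = 0) ∧ HasSum lam 1 ∧
    HasSum (fun i => lam i • x i) y}

lemma coSigmaTail_anti (x : ℕ → E) : Antitone (coSigmaTail x) := by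
  rintro m n hmn y ⟨lam, h0, hsupp, h1, hy⟩
  exact ⟨lam, h0, fun i hi => hsupp i (hi.trans_le hmn), h1, hy⟩

lemma mem_coSigmaTail_of_le {n m : ℕ} (h : n ≤ m) : x m ∈ coSigmaTail x n := by
  classical
  refine ⟨Pi.single m (1 : ℝ), fun i => ?_, fun i hi => Pi.single_eq_of_ne (by omega) _,
    hasSum_pi_single m 1, ?_⟩
  · by_cases hi : i = m <;> simp [hi]
  · simpa using hasSum_single (f := fun i => (Pi.single m 1 : ℕ → ℝ) i • x i) m
      (fun i hi => by simp [hi])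

lemma convex_coSigmaTail (x : ℕ → E) (n : ℕ) : Convex ℝ (coSigmaTail x n) := by
  rintro y ⟨l, hl0, hls, hl1, hly⟩ y' ⟨l', hl0', hls', hl1', hly'⟩ a b ha hb hab
  refine ⟨fun i => a * l i + b * l' i, fun i => ?_, fun i hi => by simp [hls i hi, hls' i hi],
    by simpa [hab] using (hl1.mul_left a).add (hl1'.mul_left b),
    by simpa [add_smul, mul_smul] using (hly.const_smul a).add (hly'.const_smul b)⟩
  have := hl0 i
  have := hl0' i
  positivity

lemma coSigmaTail_subset_coSigmaP (x : ℕ → E) (n : ℕ) : coSigmaTail x n ⊆ coSigmaP x :=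
  fun _ ⟨lam, h0, _, h1, hy⟩ => ⟨lam, h0, h1.tendsto_sum_nat, hy.tendsto_sum_nat⟩

lemma apply_le_of_mem_coSigmaTail (c : StrongDual ℝ E) {n : ℕ} {r : ℝ}
    (hr : ∀ j ≥ n, c (x j) ≤ r) {y : E} (hy : y ∈ coSigmaTail x n) : c y ≤ r := by
  obtain ⟨lam, h0, hsupp, h1, hy⟩ := hy
  have hc : HasSum (fun i => lam i * c (x i)) (c y) := by simpa using hy.mapL c
  refine hasSum_le (fun i => ?_) hc (by simpa using h1.mul_right r)
  rcases lt_or_ge i n with hi | hi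
  · simp [hsupp i hi]
  · exact mul_le_mul_of_nonneg_left (hr i hi) (h0 i)

lemma norm_smul_le_of_nonneg {a : ℝ} (ha : 0 ≤ a) {v : E} {K : ℝ} (hv : ‖v‖ ≤ K) :
    ‖a • v‖ ≤ a * K :=
  (norm_smul_of_nonneg ha v).trans_le (mul_le_mul_of_nonneg_left hv ha)

lemma norm_le_of_mem_coSigmaTail {K : ℝ} (hK : ∀ i, ‖x i‖ ≤ K) {n : ℕ} {y : E}
    (hy : y ∈ coSigmaTail x n) : ‖y‖ ≤ K := by
  obtain ⟨lam, h0, -, h1, hy⟩ := hy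
  simpa using hy.norm_le_of_bounded (h1.mul_right K) fun i => norm_smul_le_of_nonneg (h0 i) (hK i)

lemma coSigmaTail_subset_LD {D : Set (StrongDual ℝ E)} (hx : ∀ i, x i ∈ LD D) (n : ℕ) :
    coSigmaTail x n ⊆ LD D := by
  rintro y ⟨lam, h0, -, h1, hy⟩
  obtain ⟨m, hm⟩ : ∃ m, lam m ≠ 0 := by
    by_contra! h
    rw [show lam = 0 from funext h] at h1
    exact one_ne_zero (h1.unique hasSum_zero)
  obtain ⟨r, hr, hrm⟩ := hx m
  refine ⟨lam m * r, mul_neg_of_pos_of_neg ((h0 m).lt_of_ne' hm) hr, fun d hd => ?_⟩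
  have hdy : HasSum (fun i => -(lam i * d (x i))) (-d y) := by simpa using (hy.mapL d).neg
  have hterm : ∀ i, 0 ≤ -(lam i * d (x i)) := fun i => by
    obtain ⟨ri, hri, hrid⟩ := hx i
    nlinarith [h0 i, hrid d hd]
  have := le_hasSum hdy m fun i _ => hterm i
  nlinarith [mul_le_mul_of_nonneg_left (hrm d hd) (h0 m)]

variable [CompleteSpace E]

lemma hasSum_mem_coSigmaTail {K : ℝ} (hK : ∀ i, ‖x i‖ ≤ K) {n : ℕ} {c : ℕ → ℝ}
    (hc0 : ∀ k, 0 ≤ c k) (hc1 : HasSum c 1) {y : ℕ → E} (hy : ∀ k, y k ∈ coSigmaTail x n)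
    {w : E} (hw : HasSum (fun k => c k • y k) w) : w ∈ coSigmaTail x n := by
  choose L hL0 hLsupp hL1 hLy using hy
  set F : ℕ × ℕ → ℝ := fun p => c p.1 * L p.1 p.2
  have hF0 : ∀ p, 0 ≤ F p := fun p => mul_nonneg (hc0 _) (hL0 _ _)
  have hFrow : ∀ k, HasSum (fun i => F (k, i)) (c k) := fun k => by
    simpa using (hL1 k).mul_left (c k)
  have hF : Summable F := (summable_prod_of_nonneg hF0).2
    ⟨fun k => (hFrow k).summable, by simpa only [(hFrow _).tsum_eq] using hc1.summable⟩
  have hFcol : ∀ i, HasSum (fun k => F (k, i)) (∑' k, F (k, i)) :=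
    fun i => (hF.prod_symm.prod_factor i).hasSum
  have hG : Summable fun p : ℕ × ℕ => F p • x p.2 :=
    (hF.mul_right K).of_norm_bounded fun p => norm_smul_le_of_nonneg (hF0 p) (hK _)
  refine ⟨fun i => ∑' k, F (k, i), fun i => tsum_nonneg fun k => hF0 _,
    fun i hi => by simp [F, hLsupp _ i hi], hasSum_cols_of_hasSum_rows hF hFrow hFcol hc1,
    hasSum_cols_of_hasSum_rows hG (fun k => ?_) (fun i => (hFcol i).smul_const (x i)) hw⟩
  simpa [F, mul_smul] using (hLy k).const_smul (c k)

lemma summable_half_pow_smul {Y : ℕ → E} {K : ℝ} (hY : ∀ k, ‖Y k‖ ≤ K) :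
    Summable fun k => (1 / 2 : ℝ) ^ (k + 1) • Y k :=
  (hasSum_half_pow_succ.summable.mul_right K).of_norm_bounded
    fun k => norm_smul_le_of_nonneg (by positivity) (hY k)

lemma tsum_half_pow_smul_eq {Y : ℕ → E} {K : ℝ} (hY : ∀ k, ‖Y k‖ ≤ K) (n : ℕ) :
    ∑' k, (1 / 2 : ℝ) ^ (k + 1) • Y (n + k) =
      (1 / 2 : ℝ) • Y n + (1 / 2 : ℝ) • ∑' k, (1 / 2 : ℝ) ^ (k + 1) • Y (n + 1 + k) := by
  rw [(summable_half_pow_smul fun k => hY (n + k)).tsum_eq_zero_add, ← tsum_const_smul'']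
  congr 1
  · simp
  · refine tsum_congr fun k => ?_
    rw [smul_smul, ← pow_succ', show n + 1 + k = n + (k + 1) by omega]

end CoSigmaTail

section Simons

variable {E : Type*} [NormedAddCommGroup E] [NormedSpace ℝ E] [CompleteSpace E] {x : ℕ → E}

theorem exists_le_limsup_add_of_forall_exists_max {K : ℝ} (hK : ∀ i, ‖x i‖ ≤ K)
    {C : Set (StrongDual ℝ E)} (hmax : ∀ y ∈ coSigmaTail x 0, ∃ c ∈ C, ∀ c' ∈ C, c' y ≤ c y)
    {ε : ℝ} (hε : 0 < ε) :
    ∃ z ∈ coSigmaTail x 0, ∃ c ∈ C, (∀ c' ∈ C, c' z ≤ c z) ∧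
      c z ≤ limsup (fun j => c (x j)) atTop + ε := by
  choose! cmax hcmaxC hcmax using hmax
  obtain ⟨c₀, hc₀⟩ : C.Nonempty := ⟨_, hcmaxC _ (mem_coSigmaTail_of_le le_rfl)⟩
  have hbdd : BddBelow ((fun y => cmax y y) '' coSigmaTail x 0) := by
    refine ⟨-(‖c₀‖ * K), ?_⟩
    rintro _ ⟨y, hy, rfl⟩
    have hy' : ‖c₀ y‖ ≤ ‖c₀‖ * K := (c₀.le_opNorm y).trans
      (mul_le_mul_of_nonneg_left (norm_le_of_mem_coSigmaTail hK hy) (norm_nonneg _))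
    linarith [neg_abs_le (c₀ y), hcmax y hy c₀ hc₀, Real.norm_eq_abs (c₀ y)]
  obtain ⟨Y, h, hYW, h0, hsucc, hmem, hopt⟩ := exists_greedy_dyadic_seq (coSigmaTail_anti x)
    (convex_coSigmaTail x 0) (fun n => ⟨x n, mem_coSigmaTail_of_le le_rfl⟩) hbdd
    (η := fun n => ε / 2 * ((1 / 2 : ℝ) ^ n * (1 / 2 : ℝ) ^ n)) fun n => by positivity
  have hYK : ∀ k, ‖Y k‖ ≤ K := fun k => norm_le_of_mem_coSigmaTail hK (hYW k)
  set T : ℕ → E := fun n => ∑' k, (1 / 2 : ℝ) ^ (k + 1) • Y (n + k)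
  have hT : ∀ n, T n = (1 / 2 : ℝ) • Y n + (1 / 2 : ℝ) • T (n + 1) := tsum_half_pow_smul_eq hYK
  have hTW : ∀ n, T n ∈ coSigmaTail x n := fun n =>
    hasSum_mem_coSigmaTail hK (fun k => by positivity) hasSum_half_pow_succ
      (fun k => coSigmaTail_anti x (Nat.le_add_right n k) (hYW (n + k)))
      (summable_half_pow_smul fun k => hYK (n + k)).hasSum
  have hhT : ∀ n, h n + (1 / 2 : ℝ) ^ n • T n = T 0 := add_half_pow_smul_eq h0 hsucc hT
  set c := cmax (T 0)
  have hc : c ∈ C := hcmaxC _ (hTW 0)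
  -- `T n` competes with `Y n` at stage `n`, and `h n + 2⁻ⁿ T n = T 0` is where `c` is maximal.
  have hstep : ∀ n, c (T n) - ε / 2 * (1 / 2 : ℝ) ^ n ≤ c (T (n + 1)) := by
    intro n
    have h1 : c (h n) + (1 / 2 : ℝ) ^ n * c (Y n) ≤
        c (T 0) + ε / 2 * ((1 / 2 : ℝ) ^ n * (1 / 2 : ℝ) ^ n) := by
      have := (hcmax _ (hmem n (Y n) (coSigmaTail_anti x (Nat.zero_le n) (hYW n))) c hc).trans
        (hhT n ▸ hopt n (T n) (hTW n))
      rwa [map_add, map_smul, smul_eq_mul] at this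
    have h2 := congrArg c (hhT n)
    have h3 := congrArg c (hT n)
    simp only [map_add, map_smul, smul_eq_mul] at h2 h3
    have hp : 0 < (1 / 2 : ℝ) ^ n := by positivity
    have hY : c (Y n) ≤ c (T n) + ε / 2 * (1 / 2 : ℝ) ^ n :=
      le_of_mul_le_mul_left (by nlinarith) hp
    linarith
  have hlow : ∀ n, c (T 0) - ε + ε * (1 / 2 : ℝ) ^ n ≤ c (T n) := by
    intro n
    induction n with
    | zero => simp
    | succ n ih =>
      rw [pow_succ]
      linarith [hstep n]
  refine ⟨T 0, hTW 0, c, hc, hcmax _ (hTW 0), ?_⟩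
  by_contra! hlt
  have hbddx : IsBoundedUnder (· ≤ ·) atTop fun j => c (x j) :=
    isBoundedUnder_of ⟨‖c‖ * K, fun j => (Real.le_norm_self _).trans
      ((c.le_opNorm _).trans (mul_le_mul_of_nonneg_left (hK j) (norm_nonneg c)))⟩
  obtain ⟨N, hN⟩ := eventually_atTop.1
    (eventually_lt_of_limsup_lt (b := c (T 0) - ε) (by linarith) hbddx)
  have hTN := apply_le_of_mem_coSigmaTail c (fun j hj => (hN j hj).le) (hTW N)
  have := hlow N
  have : 0 < ε * (1 / 2 : ℝ) ^ N := by positivity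
  linarith

theorem simons_inequality {K : ℝ} (hK : ∀ i, ‖x i‖ ≤ K) {C : Set (StrongDual ℝ E)}
    (hmax : ∀ y ∈ coSigmaTail x 0, ∃ c ∈ C, ∀ c' ∈ C, c' y ≤ c y) :
    ⨅ y ∈ coSigmaTail x 0, ⨆ c ∈ C, ((c y : ℝ) : EReal) ≤
      ⨆ c ∈ C, ((limsup (fun n => c (x n)) atTop : ℝ) : EReal) := by
  refine EReal.le_of_forall_lt_iff_le.1 fun r hr => ?_
  obtain ⟨s, hs, hsr⟩ := EReal.exists_between_coe_real hr
  obtain ⟨z, hz, c, hc, hcz, hle⟩ :=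
    exists_le_limsup_add_of_forall_exists_max hK hmax (sub_pos.2 (EReal.coe_lt_coe_iff.1 hsr))
  have hlim : limsup (fun n => c (x n)) atTop < s :=
    EReal.coe_lt_coe_iff.1 ((le_iSup₂_of_le c hc le_rfl).trans_lt hs)
  calc ⨅ y ∈ coSigmaTail x 0, ⨆ c ∈ C, ((c y : ℝ) : EReal)
      ≤ ⨆ c' ∈ C, ((c' z : ℝ) : EReal) := iInf₂_le z hz
    _ ≤ ((c z : ℝ) : EReal) := iSup₂_le fun c' hc' => EReal.coe_le_coe_iff.2 (hcz c' hc')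
    _ ≤ r := EReal.coe_le_coe_iff.2 (by linarith)

end Simons

section Attainment

variable {E : Type*} [NormedAddCommGroup E] [NormedSpace ℝ E]

lemma isBounded_of_isCompact_toWeakDual [CompleteSpace E] {D : Set (StrongDual ℝ E)}
    (hD : IsCompact (StrongDual.toWeakDual '' D)) : IsBounded D := by
  have := WeakDual.isBounded_iff_isVonNBounded.2 (hD.isVonNBounded ℝ)
  rwa [← WeakDual.isBounded_toWeakDual_preimage_iff_isBounded,
    preimage_image_eq _ StrongDual.toWeakDual.injective] at this

lemma isOpen_LD {D : Set (StrongDual ℝ E)} (hD : IsBounded D) : IsOpen (LD D) := by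
  obtain ⟨M, hM⟩ := isBounded_iff_forall_norm_le.1 hD
  refine Metric.isOpen_iff.2 fun y ⟨r, hr, hry⟩ =>
    ⟨-r / (2 * (|M| + 1)), div_pos (by linarith) (by positivity),
      fun u hu => ⟨r / 2, by linarith, fun d hd => ?_⟩⟩
  have hdu : d (u - y) ≤ (|M| + 1) * (-r / (2 * (|M| + 1))) :=
    (Real.le_norm_self _).trans ((d.le_opNorm _).trans (mul_le_mul
      ((hM d hd).trans (by linarith [le_abs_self M])) (by rw [← dist_eq_norm]; exact hu.le)
      (norm_nonneg _) (by positivity)))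
  calc d u = d y + d (u - y) := by simp
    _ ≤ r + (|M| + 1) * (-r / (2 * (|M| + 1))) := add_le_add (hry d hd) hdu
    _ = r / 2 := by field_simp; ring

lemma isBounded_of_bddAbove_of_bddBelow [CompleteSpace E] {S : Set (StrongDual ℝ E)}
    {U : Set E} (hU : IsOpen U) {y : E} (hy : y ∈ U)
    (habove : ∀ v ∈ U, BddAbove ((fun c : StrongDual ℝ E => c v) '' S))
    (hbelow : BddBelow ((fun c : StrongDual ℝ E => c y) '' S)) : IsBounded S := by
  obtain ⟨M, hM⟩ := banach_steinhaus (g := fun c : S => (c : StrongDual ℝ E)) fun v => by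
    have hev : ∀ᶠ t in 𝓝 (0 : ℝ), y + t • v ∈ U :=
      (Continuous.continuousAt (by fun_prop)).preimage_mem_nhds (by simpa using hU.mem_nhds hy)
    obtain ⟨t, ⟨hyt, hyt'⟩, ht⟩ := ((hev.and ((continuous_neg.tendsto' 0 0 neg_zero).eventually
      hev)).filter_mono nhdsWithin_le_nhds |>.and (self_mem_nhdsWithin (s := Ioi 0))).exists
    obtain ⟨A, hA⟩ := habove _ hyt
    obtain ⟨A', hA'⟩ := habove _ hyt'
    obtain ⟨B, hB⟩ := hbelow
    refine ⟨max (A - B) (A' - B) / t, fun c => ?_⟩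
    have e₁ := hA ⟨c, c.2, rfl⟩
    have e₂ := hA' ⟨c, c.2, rfl⟩
    have e₀ := hB ⟨c, c.2, rfl⟩
    simp only [map_add, map_smul, smul_eq_mul, neg_mul] at e₀ e₁ e₂
    have : |t * (c : StrongDual ℝ E) v| ≤ max (A - B) (A' - B) :=
      abs_le.2 ⟨by linarith [le_max_right (A - B) (A' - B)],
        by linarith [le_max_left (A - B) (A' - B)]⟩
    rwa [abs_mul, abs_of_pos (show (0 : ℝ) < t from ht), mul_comm, ← le_div_iff₀ ht] at this
  exact isBounded_iff_forall_norm_le.2 ⟨M, fun c hc => hM ⟨c, hc⟩⟩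

lemma exists_forall_apply_le_of_isBounded {C : Set (StrongDual ℝ E)}
    (hC : IsClosed (StrongDual.toWeakDual '' C)) {y : E} {c₁ : StrongDual ℝ E} (hc₁ : c₁ ∈ C)
    (hbdd : IsBounded {c ∈ C | c₁ y ≤ c y}) : ∃ c ∈ C, ∀ c' ∈ C, c' y ≤ c y := by
  set S := {c ∈ C | c₁ y ≤ c y}
  have hS : StrongDual.toWeakDual '' S =
      StrongDual.toWeakDual '' C ∩ {φ : WeakDual ℝ E | c₁ y ≤ φ y} := by
    ext φ
    constructor
    · rintro ⟨c, ⟨hcC, hc⟩, rfl⟩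
      exact ⟨⟨c, hcC, rfl⟩, hc⟩
    · rintro ⟨⟨c, hcC, rfl⟩, hc⟩
      exact ⟨c, ⟨hcC, hc⟩, rfl⟩
  have hcpt : IsCompact (StrongDual.toWeakDual '' S) := by
    refine WeakDual.isCompact_of_bounded_of_closed ?_ ?_
    · rwa [← WeakDual.isBounded_toWeakDual_preimage_iff_isBounded,
        preimage_image_eq _ StrongDual.toWeakDual.injective]
    · rw [hS]
      exact hC.inter (isClosed_le continuous_const (WeakDual.eval_continuous y))
  obtain ⟨_, ⟨c, hcS, rfl⟩, hmax⟩ :=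
    hcpt.exists_isMaxOn ⟨_, c₁, ⟨hc₁, le_rfl⟩, rfl⟩ (WeakDual.eval_continuous y).continuousOn
  refine ⟨c, hcS.1, fun c' hc' => ?_⟩
  by_cases h : c₁ y ≤ c' y
  · exact hmax ⟨c', ⟨hc', h⟩, rfl⟩
  · exact (le_of_not_ge h).trans hcS.2

lemma exists_forall_apply_le_of_mem_LD [CompleteSpace E] {D C : Set (StrongDual ℝ E)}
    (hDcpt : IsCompact (StrongDual.toWeakDual '' D)) (hCcl : IsClosed (StrongDual.toWeakDual '' C))
    (hfin : ∀ x ∈ LD D, ∃ r : ℝ, IsLUB ((fun c : StrongDual ℝ E => c x) '' C) r)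
    {c₁ : StrongDual ℝ E} (hc₁ : c₁ ∈ C) {y : E} (hy : y ∈ LD D) :
    ∃ c ∈ C, ∀ c' ∈ C, c' y ≤ c y := by
  refine exists_forall_apply_le_of_isBounded hCcl hc₁
    (isBounded_of_bddAbove_of_bddBelow (isOpen_LD (isBounded_of_isCompact_toWeakDual hDcpt)) hy
      (fun v hv => ?_) ⟨c₁ y, by rintro _ ⟨c, hc, rfl⟩; exact hc.2⟩)
  obtain ⟨r, hr⟩ := hfin v hv
  exact hr.bddAbove.mono (image_mono (sep_subset _ _))

end Attainment

theorem sup_limsup_implies_simons_inequality_general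
    {E : Type*} [NormedAddCommGroup E] [NormedSpace ℝ E] [CompleteSpace E]
    (D : Set (StrongDual ℝ E))
    (hDcpt : IsCompact (StrongDual.toWeakDual '' D))
    (C : Set (StrongDual ℝ E))
    (hCcl : IsClosed (StrongDual.toWeakDual '' C))
    (hfin : ∀ x ∈ LD D, ∃ r : ℝ, IsLUB ((fun c : StrongDual ℝ E => c x) '' C) r)
    (B : Set (StrongDual ℝ E))
    (hsl : ∀ x : ℕ → E, (∀ n, x n ∈ LD D) → Bornology.IsBounded (Set.range x) →
      (⨆ b ∈ B, ((Filter.limsup (fun n => b (x n)) atTop : ℝ) : EReal)) =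
        ⨆ c ∈ C, ((Filter.limsup (fun n => c (x n)) atTop : ℝ) : EReal)) :
    ∀ x : ℕ → E, (∀ n, x n ∈ LD D) → Bornology.IsBounded (Set.range x) →
      (⨅ y ∈ coSigmaP x, ⨆ c ∈ C, ((c y : ℝ) : EReal)) ≤
        ⨆ b ∈ B, ((Filter.limsup (fun n => b (x n)) atTop : ℝ) : EReal) := by
  intro x hx hxb
  rw [hsl x hx hxb]
  obtain ⟨K, hK⟩ := isBounded_iff_forall_norm_le.1 hxb
  have hx0 : x 0 ∈ coSigmaP x := coSigmaTail_subset_coSigmaP x 0 (mem_coSigmaTail_of_le le_rfl)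
  rcases C.eq_empty_or_nonempty with rfl | ⟨c₁, hc₁⟩
  · exact (iInf₂_le (x 0) hx0).trans (by simp)
  refine (biInf_mono (coSigmaTail_subset_coSigmaP x 0)).trans
    (simons_inequality (fun i => hK _ (mem_range_self i)) fun y hy => ?_)
  exact exists_forall_apply_le_of_mem_LD hDcpt hCcl hfin hc₁ (coSigmaTail_subset_LD hx 0 hy)

/-- (ii) ⇒ (iii) of the equivalence between one-side (I)-generation and Simons' inequality:
if for every bounded sequence `(xₙ)` in `L_D` the sup over `B` of `limsupₙ ⟨xₙ, ·⟩` equals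
the sup over `C`, then for every bounded sequence `(xₙ)` in `L_D` the sup over `B` of
`limsupₙ ⟨xₙ, ·⟩` dominates `inf{sup(x, C) : x ∈ co_{σp}{xₙ}}`. -/
theorem sup_limsup_implies_simons_inequality
    {E : Type*} [NormedAddCommGroup E] [NormedSpace ℝ E] [CompleteSpace E]
    (D : Set (StrongDual ℝ E)) (hDne : D.Nonempty)
    (hDcpt : IsCompact (StrongDual.toWeakDual '' D)) (hDconv : Convex ℝ D)
    (hD0 : (0 : StrongDual ℝ E) ∉ D)
    (C : Set (StrongDual ℝ E))
    (hCcl : IsClosed (StrongDual.toWeakDual '' C)) (hCconv : Convex ℝ C)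
    (hfin : ∀ x ∈ LD D, ∃ r : ℝ, IsLUB ((fun c : StrongDual ℝ E => c x) '' C) r)
    (B : Set (StrongDual ℝ E)) (hBC : B ⊆ C)
    (hsl : ∀ x : ℕ → E, (∀ n, x n ∈ LD D) → Bornology.IsBounded (Set.range x) →
      (⨆ b ∈ B, ((Filter.limsup (fun n => b (x n)) atTop : ℝ) : EReal)) =
        ⨆ c ∈ C, ((Filter.limsup (fun n => c (x n)) atTop : ℝ) : EReal)) :
    ∀ x : ℕ → E, (∀ n, x n ∈ LD D) → Bornology.IsBounded (Set.range x) →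
      (⨅ y ∈ coSigmaP x, ⨆ c ∈ C, ((c y : ℝ) : EReal)) ≤
        ⨆ b ∈ B, ((Filter.limsup (fun n => b (x n)) atTop : ℝ) : EReal) :=
  sup_limsup_implies_simons_inequality_general D hDcpt C hCcl hfin B hsl
end

section
/- Let E be a real Banach space, D ⊆ E* a nonempty weak*-compact convex set with 0 ∉ D, C ⊆ E* a weak*-closed convex set such that every x ∈ L_D has finite supremum on C, and B ⊆ C. Suppose that for every bounded sequence (x_n) in L_D one has sup_{b* ∈ B} (limsup_n ⟨x_n,b*⟩) ≥ inf{ sup_{c* ∈ C} ⟨c*,x⟩ : x ∈ co_{σp}{x_n : n ≥ 1} }. Then for every covering B ⊆ ∪_{n=1}^∞ K_n by an increasing sequence of weak*-compact convex subsets K_n ⊆ C, one has C ⊆ norm-closure(∪_{n=1}^∞ K_n + Λ_D). -/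
open Filter Topology Pointwise

/-! Suppose `c₀ ∈ C` lies at distance `ε > 0` from `⋃ₙ Kₙ + Λ_D`. Since `D` is weak*-compact and
does not contain `0`, some `x₀` is strictly negative on `D`, and this makes the cone `Λ_D`
weak*-closed. Separating the weak*-closed convex set `Kₙ + Λ_D` from the weak*-compact ball
`B(c₀, ε/2)` gives unit vectors `xₙ` with `d xₙ ≤ 0` on `D` and `k xₙ + ε/2 ≤ c₀ xₙ` on `Kₙ`; a
small push along `x₀` moves them into `L_D`. Along a subsequence on which `c₀ xₙ` is almost constant,
every `b ∈ B ⊆ ⋃ₙ Kₙ` eventually stays `ε/4` below that constant, whereas `c₀ ∈ C` keeps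
`sup_{c ∈ C} c y` above it for every `y ∈ co_{σp}`, contradicting Simons' inequality. -/

open Set

section Cone

variable {X : Type*} [AddCommGroup X] [Module ℝ X]

theorem Convex.Ici_smul {s : Set X} (hs : Convex ℝ s) : Convex ℝ (Ici (0 : ℝ) • s) := by
  rintro _ ⟨l₁, hl₁, d₁, hd₁, rfl⟩ _ ⟨l₂, hl₂, d₂, hd₂, rfl⟩ p q hp hq hpq
  rw [mem_Ici] at hl₁ hl₂
  set t := p * l₁ + q * l₂
  obtain ht | ht : t = 0 ∨ 0 < t := (by positivity : 0 ≤ t).eq_or_lt'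
  · have h₁ : p * l₁ = 0 := by nlinarith [mul_nonneg hp hl₁, mul_nonneg hq hl₂]
    have h₂ : q * l₂ = 0 := by nlinarith [mul_nonneg hp hl₁, mul_nonneg hq hl₂]
    refine ⟨0, self_mem_Ici, d₁, hd₁, ?_⟩
    simp only [smul_smul, h₁, h₂, zero_smul, add_zero]
  · refine ⟨t, ht.le, (p * l₁ / t) • d₁ + (q * l₂ / t) • d₂,
      hs hd₁ hd₂ (by positivity) (by positivity) (by field_simp; rfl), ?_⟩
    simp only [smul_add, smul_smul, mul_div_cancel₀ _ ht.ne']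

variable [TopologicalSpace X] [ContinuousSMul ℝ X] [T2Space X]

theorem IsCompact.isClosed_Ici_smul {K : Set X} (hK : IsCompact K) (φ : X →L[ℝ] ℝ) {r : ℝ}
    (hr : r < 0) (hφ : ∀ k ∈ K, φ k ≤ r) : IsClosed (Ici (0 : ℝ) • K) := by
  refine closure_subset_iff_isClosed.1 fun z hz => ?_
  set V := {w | φ z - 1 < φ w}
  have hV : IsOpen V := isOpen_lt continuous_const φ.continuous
  -- near `z`, the cone only uses scalars up to `(φ z - 1) / r`
  have hsub : V ∩ Ici (0 : ℝ) • K ⊆ Icc 0 ((φ z - 1) / r) • K := by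
    rintro _ ⟨hw, l, hl, k, hk, rfl⟩
    refine smul_mem_smul ⟨hl, (le_div_iff_of_neg hr).2 ?_⟩ hk
    have : φ z - 1 < l * φ k := by simpa [V] using hw
    nlinarith [mul_le_mul_of_nonneg_left (hφ k hk) (mem_Ici.1 hl)]
  have hcl : IsClosed (Icc 0 ((φ z - 1) / r) • K) := (isCompact_Icc.smul_set hK).isClosed
  have hzV : z ∈ V := by simp [V]
  exact smul_subset_smul_right Icc_subset_Ici_self
    (hcl.closure_subset_iff.2 hsub (hV.inter_closure ⟨hzV, hz⟩))

end Cone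

theorem exists_strictMono_forall_abs_sub_lt {u : ℕ → ℝ} (hu : Bornology.IsBounded (range u))
    {η : ℝ} (hη : 0 < η) : ∃ L : ℝ, ∃ φ : ℕ → ℕ, StrictMono φ ∧ ∀ n, |u (φ n) - L| < η := by
  obtain ⟨L, -, φ, hφ, hL⟩ := tendsto_subseq_of_bounded hu fun n => mem_range_self n
  obtain ⟨ψ, hψ, hψL⟩ := extraction_of_eventually_atTop (hL.eventually (Metric.ball_mem_nhds L hη))
  exact ⟨L, φ ∘ ψ, hφ.comp hψ, fun n => by simpa [Real.dist_eq] using hψL n⟩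

section Dual

variable {E : Type*} [NormedAddCommGroup E] [NormedSpace ℝ E]

theorem WeakDual.exists_separating_vector {s t : Set (WeakDual ℝ E)} (hs₁ : Convex ℝ s)
    (hs₂ : IsClosed s) (ht₁ : Convex ℝ t) (ht₂ : IsCompact t) (disj : Disjoint s t) :
    ∃ (x : E) (u v : ℝ), (∀ a ∈ s, a x < u) ∧ u < v ∧ ∀ b ∈ t, v < b x := by
  have : LocallyConvexSpace ℝ (WeakDual ℝ E) := WeakBilin.locallyConvexSpace
  obtain ⟨f, u, v, hs, huv, ht⟩ := geometric_hahn_banach_closed_compact hs₁ hs₂ ht₁ ht₂ disj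
  obtain ⟨x, rfl⟩ := LinearMap.dualEmbedding_surjective (topDualPairing ℝ E) f
  exact ⟨x, u, v, hs, huv, ht⟩

theorem StrongDual.mem_image_toWeakDual {S : Set (StrongDual ℝ E)} {w : WeakDual ℝ E} :
    w ∈ toWeakDual '' S ↔ WeakDual.toStrongDual w ∈ S := by
  rw [← WeakDual.symm_toStrongDual, LinearEquiv.image_symm_eq_preimage, mem_preimage]

theorem Convex.image_toWeakDual {S : Set (StrongDual ℝ E)} (hS : Convex ℝ S) :
    Convex ℝ (StrongDual.toWeakDual '' S) :=
  hS.linear_image StrongDual.toWeakDual.toLinearMap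

variable {D : Set (StrongDual ℝ E)}

theorem lambdaD_eq_Ici_smul (hD : D.Nonempty) : LambdaD D = Ici (0 : ℝ) • D := by
  ext z
  constructor
  · rintro (rfl | ⟨l, hl, d, hd, rfl⟩)
    · obtain ⟨d, hd⟩ := hD
      exact ⟨0, self_mem_Ici, d, hd, zero_smul _ _⟩
    · exact smul_mem_smul (mem_Ici.2 hl.le) hd
  · rintro ⟨l, hl, d, hd, rfl⟩
    obtain rfl | hl := (mem_Ici.1 hl).eq_or_lt
    · exact Or.inl (zero_smul _ _)
    · exact Or.inr ⟨l, hl, d, hd, rfl⟩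

theorem image_toWeakDual_lambdaD (hD : D.Nonempty) :
    StrongDual.toWeakDual '' LambdaD D = Ici (0 : ℝ) • StrongDual.toWeakDual '' D := by
  rw [lambdaD_eq_Ici_smul hD, ← image2_smul, ← image2_smul,
    image_image2_distrib fun l d => map_smul StrongDual.toWeakDual l d, image_id']

theorem convex_lambdaD (hD : D.Nonempty) (hDconv : Convex ℝ D) : Convex ℝ (LambdaD D) :=
  lambdaD_eq_Ici_smul hD ▸ hDconv.Ici_smul

theorem smul_mem_ld {x : E} (hx : x ∈ LD D) {t : ℝ} (ht : 0 < t) : t • x ∈ LD D := by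
  obtain ⟨r, hr, hxr⟩ := hx
  exact ⟨t * r, mul_neg_of_pos_of_neg ht hr, fun d hd => by
    simpa using mul_le_mul_of_nonneg_left (hxr d hd) ht.le⟩

theorem add_mem_ld {x y : E} (hx : ∀ d ∈ D, d x ≤ 0) (hy : y ∈ LD D) : x + y ∈ LD D := by
  obtain ⟨r, hr, hyr⟩ := hy
  exact ⟨r, hr, fun d hd => by simpa using add_le_add (hx d hd) (hyr d hd)⟩

theorem ne_zero_of_mem_ld (hD : D.Nonempty) {x : E} (hx : x ∈ LD D) : x ≠ 0 := by
  rintro rfl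
  obtain ⟨r, hr, hxr⟩ := hx
  obtain ⟨d, hd⟩ := hD
  simpa using (hxr d hd).trans_lt hr

theorem exists_mem_ld_norm_eq_one (hDne : D.Nonempty)
    (hDcpt : IsCompact (StrongDual.toWeakDual '' D)) (hDconv : Convex ℝ D)
    (hD0 : (0 : StrongDual ℝ E) ∉ D) : ∃ x ∈ LD D, ‖x‖ = 1 := by
  have hdisj : Disjoint (StrongDual.toWeakDual '' D) {0} := by
    simpa [StrongDual.mem_image_toWeakDual] using hD0
  obtain ⟨x, u, v, hDu, huv, hv⟩ := WeakDual.exists_separating_vector hDconv.image_toWeakDual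
    hDcpt.isClosed (convex_singleton 0) isCompact_singleton hdisj
  have hx : x ∈ LD D := ⟨u, huv.trans (hv 0 rfl),
    fun d hd => (hDu _ (mem_image_of_mem _ hd)).le⟩
  have hx0 := ne_zero_of_mem_ld hDne hx
  exact ⟨‖x‖⁻¹ • x, smul_mem_ld hx (by positivity), norm_smul_inv_norm hx0⟩

theorem isClosed_image_toWeakDual_lambdaD (hDne : D.Nonempty)
    (hDcpt : IsCompact (StrongDual.toWeakDual '' D)) {x₀ : E} (hx₀ : x₀ ∈ LD D) :
    IsClosed (StrongDual.toWeakDual '' LambdaD D) := by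
  obtain ⟨r, hr, hx₀r⟩ := hx₀
  rw [image_toWeakDual_lambdaD hDne]
  refine hDcpt.isClosed_Ici_smul (WeakBilin.eval (topDualPairing ℝ E) x₀) hr ?_
  rintro _ ⟨d, hd, rfl⟩
  exact hx₀r d hd

theorem exists_norm_eq_one_forall_add_le_of_far (hDne : D.Nonempty) (hDconv : Convex ℝ D)
    (hΛ : IsClosed (StrongDual.toWeakDual '' LambdaD D)) {K : Set (StrongDual ℝ E)}
    (hKne : K.Nonempty) (hKcpt : IsCompact (StrongDual.toWeakDual '' K)) (hKconv : Convex ℝ K)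
    {c₀ : StrongDual ℝ E} {ε : ℝ} (hε : 0 < ε) (hfar : ∀ w ∈ K + LambdaD D, ε ≤ dist c₀ w) :
    ∃ x : E, ‖x‖ = 1 ∧ (∀ d ∈ D, d x ≤ 0) ∧ ∀ k ∈ K, k x + ε / 2 ≤ c₀ x := by
  set ball := WeakDual.toStrongDual ⁻¹' Metric.closedBall c₀ (ε / 2)
  have hdisj :
      Disjoint (StrongDual.toWeakDual '' K + StrongDual.toWeakDual '' LambdaD D) ball := by
    rw [disjoint_left]
    rintro _ ⟨k, hk, l, hl, rfl⟩ hball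
    rw [StrongDual.mem_image_toWeakDual] at hk hl
    have := hfar _ (add_mem_add hk hl)
    rw [mem_preimage, map_add, Metric.mem_closedBall, dist_comm] at hball
    linarith
  obtain ⟨x, u, v, hsep, huv, hv⟩ := WeakDual.exists_separating_vector
    (hKconv.image_toWeakDual.add (convex_lambdaD hDne hDconv).image_toWeakDual)
    (hΛ.add_left_of_isCompact hKcpt)
    ((convex_closedBall c₀ (ε / 2)).linear_preimage WeakDual.toStrongDual.toLinearMap)
    (WeakDual.isCompact_closedBall c₀ (ε / 2)) hdisj
  have hKΛ : ∀ k ∈ K, ∀ l ∈ LambdaD D, k x + l x < u := fun k hk l hl =>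
    hsep _ (add_mem_add (mem_image_of_mem _ hk) (mem_image_of_mem _ hl))
  obtain ⟨k₀, hk₀⟩ := hKne
  have hK : ∀ k ∈ K, k x < u := fun k hk => by simpa using hKΛ k hk 0 (Or.inl rfl)
  -- `Λ_D` is a cone, so a functional bounded above on `k₀ + Λ_D` is nonpositive on `D`
  have hD : ∀ d ∈ D, d x ≤ 0 := by
    intro d hd
    by_contra! hdx
    set t := (u - k₀ x) / d x + 1
    have ht : 0 < t := by positivity [sub_pos.2 (hK k₀ hk₀)]
    have := hKΛ k₀ hk₀ (t • d) (Or.inr ⟨t, ht, d, hd, rfl⟩)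
    rw [smul_apply, smul_eq_mul, add_mul, div_mul_cancel₀ _ hdx.ne'] at this
    linarith
  obtain ⟨g, hg, hgx⟩ := exists_dual_vector'' ℝ x
  rw [RCLike.ofReal_real_eq_id, id] at hgx
  have hgap : ∀ k ∈ K, k x + ε / 2 * ‖x‖ < c₀ x := by
    intro k hk
    have hball : StrongDual.toWeakDual (c₀ - (ε / 2) • g) ∈ ball := by
      simpa [ball, norm_smul, abs_of_pos hε] using mul_le_of_le_one_right (by positivity) hg
    have := hv _ hball
    rw [StrongDual.toWeakDual_apply, sub_apply, smul_apply, smul_eq_mul, hgx] at this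
    linarith [hK k hk]
  have hx0 : x ≠ 0 := by
    rintro rfl
    simpa using hgap k₀ hk₀
  have hnx : 0 < ‖x‖⁻¹ := by positivity
  refine ⟨‖x‖⁻¹ • x, norm_smul_inv_norm hx0, fun d hd => ?_, fun k hk => ?_⟩
  · simpa using mul_nonpos_of_nonneg_of_nonpos hnx.le (hD d hd)
  · have := mul_le_mul_of_nonneg_left (hgap k hk).le hnx.le
    rw [mul_add, mul_left_comm, inv_mul_cancel₀ (norm_ne_zero_iff.2 hx0), mul_one] at this
    simpa using this

theorem exists_mem_ld_norm_le_forall_add_le_of_far (hDne : D.Nonempty) (hDconv : Convex ℝ D)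
    (hΛ : IsClosed (StrongDual.toWeakDual '' LambdaD D)) {x₀ : E} (hx₀ : x₀ ∈ LD D)
    (hx₀_norm : ‖x₀‖ = 1) {K : Set (StrongDual ℝ E)}
    (hKcpt : IsCompact (StrongDual.toWeakDual '' K)) (hKconv : Convex ℝ K)
    {c₀ : StrongDual ℝ E} {ε : ℝ} (hε : 0 < ε) (hfar : ∀ w ∈ K + LambdaD D, ε ≤ dist c₀ w) :
    ∃ y ∈ LD D, ‖y‖ ≤ 2 ∧ ∀ k ∈ K, k y + ε / 4 ≤ c₀ y := by
  obtain rfl | hKne := K.eq_empty_or_nonempty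
  · exact ⟨x₀, hx₀, by linarith, by simp⟩
  obtain ⟨x, hx1, hxD, hxK⟩ :=
    exists_norm_eq_one_forall_add_le_of_far hDne hDconv hΛ hKne hKcpt hKconv hε hfar
  obtain ⟨M, hM⟩ := hKcpt.bddAbove_image (WeakDual.eval_continuous x₀).continuousOn
  set N := max (M - c₀ x₀) 1
  set δ := min 1 (ε / (4 * N))
  have hN : 0 < N := lt_max_of_lt_right one_pos
  have hδ : 0 < δ := lt_min one_pos (by positivity)
  have hδN : δ * N ≤ ε / 4 := by
    calc δ * N ≤ ε / (4 * N) * N := by gcongr; exact min_le_right _ _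
      _ = ε / 4 := by field_simp
  refine ⟨x + δ • x₀, add_mem_ld hxD (smul_mem_ld hx₀ hδ), ?_, fun k hk => ?_⟩
  · calc ‖x + δ • x₀‖ ≤ ‖x‖ + δ * ‖x₀‖ := by
          simpa [norm_smul, abs_of_pos hδ] using norm_add_le x (δ • x₀)
      _ ≤ 2 := by rw [hx1, hx₀_norm]; linarith [min_le_left 1 (ε / (4 * N))]
  · have hkM : k x₀ ≤ M := hM ⟨_, mem_image_of_mem _ hk, rfl⟩
    have hkx₀ : k x₀ - c₀ x₀ ≤ N := by linarith [le_max_left (M - c₀ x₀) 1]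
    have := mul_le_mul_of_nonneg_left hkx₀ hδ.le
    simp only [map_add, map_smul, smul_eq_mul]
    linarith [hxK k hk]

theorem le_apply_of_mem_coSigmaP {x : ℕ → E} {y : E} (hy : y ∈ coSigmaP x) (f : StrongDual ℝ E)
    {a : ℝ} (ha : ∀ n, a ≤ f (x n)) : a ≤ f y := by
  obtain ⟨lam, hlam, hsum, hy⟩ := hy
  have hle : ∀ N, (∑ n ∈ Finset.range N, lam n) * a ≤ f (∑ n ∈ Finset.range N, lam n • x n) := by
    intro N
    rw [map_sum, Finset.sum_mul]
    exact Finset.sum_le_sum fun n _ => by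
      simpa [mul_comm] using mul_le_mul_of_nonneg_left (ha n) (hlam n)
  simpa using le_of_tendsto_of_tendsto' (hsum.mul_const a) ((f.continuous.tendsto y).comp hy) hle

theorem limsup_apply_le {z : ℕ → E} (hz : Bornology.IsBounded (range z)) (f : StrongDual ℝ E)
    {a : ℝ} (ha : ∀ᶠ n in atTop, f (z n) ≤ a) : limsup (fun n => f (z n)) atTop ≤ a := by
  obtain ⟨R, hR⟩ := isBounded_iff_forall_norm_le.1 hz
  refine limsup_le_of_le (isCoboundedUnder_le_of_le atTop (x := -(‖f‖ * R)) fun n => ?_) ha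
  exact neg_le_of_abs_le ((f.le_opNorm (z n)).trans
    (mul_le_mul_of_nonneg_left (hR _ (mem_range_self n)) (norm_nonneg f)))

theorem iSup_limsup_lt_iInf_coSigmaP {B C : Set (StrongDual ℝ E)} {K : ℕ → Set (StrongDual ℝ E)}
    (hK : Monotone K) (hBK : B ⊆ ⋃ n, K n) {c₀ : StrongDual ℝ E} (hc₀ : c₀ ∈ C) {z : ℕ → E}
    (hz : Bornology.IsBounded (range z)) {a b : ℝ} (hab : a < b)
    (hKz : ∀ n, ∀ k ∈ K n, k (z n) ≤ a) (hc₀z : ∀ n, b ≤ c₀ (z n)) :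
    ⨆ k ∈ B, ((limsup (fun n => k (z n)) atTop : ℝ) : EReal) <
      ⨅ y ∈ coSigmaP z, ⨆ c ∈ C, ((c y : ℝ) : EReal) := by
  calc ⨆ k ∈ B, ((limsup (fun n => k (z n)) atTop : ℝ) : EReal) ≤ (a : EReal) := by
        refine iSup₂_le fun k hk => EReal.coe_le_coe_iff.2 (limsup_apply_le hz k ?_)
        obtain ⟨m, hm⟩ := mem_iUnion.1 (hBK hk)
        filter_upwards [eventually_ge_atTop m] with n hn using hKz n k (hK hn hm)
    _ < b := EReal.coe_lt_coe_iff.2 hab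
    _ ≤ ⨅ y ∈ coSigmaP z, ⨆ c ∈ C, ((c y : ℝ) : EReal) :=
        le_iInf₂ fun y hy => le_iSup₂_of_le c₀ hc₀
          (EReal.coe_le_coe_iff.2 (le_apply_of_mem_coSigmaP hy c₀ hc₀z))

end Dual

theorem simons_inequality_implies_one_side_I_generation_general
    {E : Type*} [NormedAddCommGroup E] [NormedSpace ℝ E]
    (D : Set (StrongDual ℝ E)) (hDne : D.Nonempty)
    (hDcpt : IsCompact (StrongDual.toWeakDual '' D)) (hDconv : Convex ℝ D)
    (hD0 : (0 : StrongDual ℝ E) ∉ D)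
    (C : Set (StrongDual ℝ E))
    (B : Set (StrongDual ℝ E))
    (hsimons : ∀ x : ℕ → E, (∀ n, x n ∈ LD D) → Bornology.IsBounded (Set.range x) →
      (⨅ y ∈ coSigmaP x, ⨆ c ∈ C, ((c y : ℝ) : EReal)) ≤
        ⨆ b ∈ B, ((Filter.limsup (fun n => b (x n)) atTop : ℝ) : EReal)) :
    ∀ K : ℕ → Set (StrongDual ℝ E), Monotone K →
      (∀ n, IsCompact (StrongDual.toWeakDual '' K n)) →
      (∀ n, Convex ℝ (K n)) → (∀ n, K n ⊆ C) → B ⊆ ⋃ n, K n →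
      C ⊆ closure ((⋃ n, K n) + LambdaD D) := by
  intro K hK hKcpt hKconv _ hBK c₀ hc₀
  by_contra hc₀K
  obtain ⟨ε, hε, hfar⟩ : ∃ ε > 0, ∀ w ∈ (⋃ n, K n) + LambdaD D, ε ≤ dist c₀ w := by
    simpa [Metric.mem_closure_iff] using hc₀K
  obtain ⟨x₀, hx₀, hx₀_norm⟩ := exists_mem_ld_norm_eq_one hDne hDcpt hDconv hD0
  have hΛ := isClosed_image_toWeakDual_lambdaD hDne hDcpt hx₀
  choose y hyD hy_norm hyK using fun n =>
    exists_mem_ld_norm_le_forall_add_le_of_far hDne hDconv hΛ hx₀ hx₀_norm (hKcpt n) (hKconv n) hε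
      fun w hw => hfar w (add_subset_add_right (subset_iUnion K n) hw)
  have hy : Bornology.IsBounded (range y) :=
    isBounded_iff_forall_norm_le.2 ⟨2, forall_mem_range.2 hy_norm⟩
  obtain ⟨L, φ, hφ, hL⟩ := exists_strictMono_forall_abs_sub_lt
    (range_comp c₀ y ▸ c₀.lipschitz.isBounded_image hy) (by positivity : 0 < ε / 16)
  have hz : Bornology.IsBounded (range fun n => y (φ n)) := hy.subset (range_comp_subset_range φ y)
  have hLz : ∀ n, |c₀ (y (φ n)) - L| < ε / 16 := hL
  refine (hsimons _ (fun n => hyD (φ n)) hz).not_gt (iSup_limsup_lt_iInf_coSigmaP hK hBK hc₀ hz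
    (a := L - 3 * ε / 16) (b := L - ε / 16) (by linarith) (fun n k hk => ?_) fun n => ?_)
  · linarith [hyK (φ n) k (hK (hφ.id_le n) hk), (abs_lt.1 (hLz n)).2]
  · linarith [(abs_lt.1 (hLz n)).1]

/-- (iii) ⇒ (i) of the equivalence between one-side (I)-generation and Simons' inequality:
if for every bounded sequence `(xₙ)` in `L_D` the sup over `B` of `limsupₙ ⟨xₙ, ·⟩`
dominates `inf{sup(x, C) : x ∈ co_{σp}{xₙ}}`, then for every covering of `B` by an
increasing sequence of weak*-compact convex subsets `Kₙ ⊆ C` one has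
`C ⊆ norm-closure(⋃ₙ Kₙ + Λ_D)`. -/
theorem simons_inequality_implies_one_side_I_generation
    {E : Type*} [NormedAddCommGroup E] [NormedSpace ℝ E] [CompleteSpace E]
    (D : Set (StrongDual ℝ E)) (hDne : D.Nonempty)
    (hDcpt : IsCompact (StrongDual.toWeakDual '' D)) (hDconv : Convex ℝ D)
    (hD0 : (0 : StrongDual ℝ E) ∉ D)
    (C : Set (StrongDual ℝ E))
    (hCcl : IsClosed (StrongDual.toWeakDual '' C)) (hCconv : Convex ℝ C)
    (hfin : ∀ x ∈ LD D, ∃ r : ℝ, IsLUB ((fun c : StrongDual ℝ E => c x) '' C) r)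
    (B : Set (StrongDual ℝ E)) (hBC : B ⊆ C)
    (hsimons : ∀ x : ℕ → E, (∀ n, x n ∈ LD D) → Bornology.IsBounded (Set.range x) →
      (⨅ y ∈ coSigmaP x, ⨆ c ∈ C, ((c y : ℝ) : EReal)) ≤
        ⨆ b ∈ B, ((Filter.limsup (fun n => b (x n)) atTop : ℝ) : EReal)) :
    ∀ K : ℕ → Set (StrongDual ℝ E), Monotone K →
      (∀ n, IsCompact (StrongDual.toWeakDual '' K n)) →
      (∀ n, Convex ℝ (K n)) → (∀ n, K n ⊆ C) → B ⊆ ⋃ n, K n →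
      C ⊆ closure ((⋃ n, K n) + LambdaD D) :=
  simons_inequality_implies_one_side_I_generation_general D hDne hDcpt hDconv hD0 C B hsimons
end

section
/- Let E be a real Banach space, D ⊆ E* a nonempty weak*-compact convex set with 0 ∉ D, and C ⊆ E* a weak*-closed convex set such that every y ∈ L_D has finite supremum on C. Then every x ∈ L_D attains its supremum on C, i.e. there exists c* ∈ C with ⟨x,c*⟩ = sup{⟨x,z*⟩ : z* ∈ C}. -/
open Filter Topology

/-!
Because `D` is weak*-compact, `L_D` is algebraically open: from `x ∈ L_D` one can move a little in
every direction `± z` and stay in `L_D`, where the evaluations on `C` are bounded above. This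
bounds `|c z|` on every slice `{c ∈ C | a ≤ c x}`, so by Banach–Steinhaus the slices are norm
bounded and, being weak*-closed, weak*-compact by Banach–Alaoglu. Evaluation at `x` therefore
attains its maximum on a nonempty slice, and that maximum is the supremum over `C`.
-/

theorem isBounded_of_forall_norm_apply_le {𝕜 E F : Type*} [NontriviallyNormedField 𝕜]
    [NormedAddCommGroup E] [NormedSpace 𝕜 E] [CompleteSpace E]
    [NormedAddCommGroup F] [NormedSpace 𝕜 F]
    {S : Set (E →L[𝕜] F)} (hS : ∀ z, ∃ B, ∀ f ∈ S, ‖f z‖ ≤ B) : Bornology.IsBounded S := by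
  obtain ⟨B, hB⟩ := banach_steinhaus (g := ((↑) : S → E →L[𝕜] F))
    fun z => (hS z).imp fun _ h f => h f f.2
  exact isBounded_iff_forall_norm_le.mpr ⟨B, fun f hf => hB ⟨f, hf⟩⟩

section

variable {E : Type*} [NormedAddCommGroup E] [NormedSpace ℝ E]

theorem bddAbove_eval_of_isCompact {D : Set (StrongDual ℝ E)}
    (hD : IsCompact (StrongDual.toWeakDual '' D)) (z : E) :
    BddAbove ((fun d : StrongDual ℝ E => d z) '' D) := by
  have h := (hD.image (WeakDual.eval_continuous z)).bddAbove
  rwa [Set.image_image] at h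

theorem exists_pos_add_smul_mem_LD {D : Set (StrongDual ℝ E)}
    (hD : ∀ z, BddAbove ((fun d : StrongDual ℝ E => d z) '' D)) {x : E} (hx : x ∈ LD D)
    (z : E) : ∃ t > (0 : ℝ), x + t • z ∈ LD D := by
  obtain ⟨s, hs, hsD⟩ := hx
  obtain ⟨m, hm⟩ := hD z
  obtain ⟨t, ht, hmt⟩ := exists_pos_mul_lt (neg_pos.mpr hs) m
  refine ⟨t, ht, s + m * t, by linarith, fun d hd => ?_⟩
  have htdz : t * d z ≤ t * m := mul_le_mul_of_nonneg_left (hm ⟨d, hd, rfl⟩) ht.le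
  rw [map_add, map_smul, smul_eq_mul]
  linarith [hsD d hd]

section Slice

variable {C : Set (StrongDual ℝ E)} {x : E}

theorem exists_eval_le_of_bddAbove_add_smul {z : E} {t : ℝ} (ht : 0 < t)
    (hC : BddAbove ((fun c : StrongDual ℝ E => c (x + t • z)) '' C)) (a : ℝ) :
    ∃ B, ∀ c ∈ C, a ≤ c x → c z ≤ B := by
  obtain ⟨M, hM⟩ := hC
  refine ⟨(M - a) / t, fun c hc hac => ?_⟩
  have hcM : c (x + t • z) ≤ M := hM ⟨c, hc, rfl⟩
  rw [map_add, map_smul, smul_eq_mul] at hcM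
  rw [le_div_iff₀ ht]
  linarith

theorem exists_abs_eval_le_of_le_eval
    (hdir : ∀ z, ∃ t > (0 : ℝ), BddAbove ((fun c : StrongDual ℝ E => c (x + t • z)) '' C))
    (a : ℝ) (z : E) : ∃ B, ∀ c ∈ C, a ≤ c x → |c z| ≤ B := by
  obtain ⟨t₁, ht₁, hC₁⟩ := hdir z
  obtain ⟨t₂, ht₂, hC₂⟩ := hdir (-z)
  obtain ⟨B₁, hB₁⟩ := exists_eval_le_of_bddAbove_add_smul ht₁ hC₁ a
  obtain ⟨B₂, hB₂⟩ := exists_eval_le_of_bddAbove_add_smul ht₂ hC₂ a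
  refine ⟨max B₁ B₂, fun c hc hac => abs_le.mpr ⟨?_, ?_⟩⟩
  · have hneg := hB₂ c hc hac
    rw [map_neg] at hneg
    linarith [le_max_right B₁ B₂]
  · exact (hB₁ c hc hac).trans (le_max_left B₁ B₂)

end Slice

theorem exists_isGreatest_eval_of_isClosed [CompleteSpace E] {C : Set (StrongDual ℝ E)}
    (hC : IsClosed (StrongDual.toWeakDual '' C)) (hCne : C.Nonempty) {x : E}
    (hdir : ∀ z, ∃ t > (0 : ℝ), BddAbove ((fun c : StrongDual ℝ E => c (x + t • z)) '' C)) :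
    ∃ c₀ ∈ C, IsGreatest ((fun c : StrongDual ℝ E => c x) '' C) (c₀ x) := by
  obtain ⟨c₁, hc₁⟩ := hCne
  set K : Set (WeakDual ℝ E) := StrongDual.toWeakDual '' C ∩ {w | c₁ x ≤ w x}
  have hKbdd : Bornology.IsBounded K := by
    refine isBounded_of_forall_norm_apply_le fun z => ?_
    obtain ⟨B, hB⟩ := exists_abs_eval_le_of_le_eval hdir (c₁ x) z
    refine ⟨B, fun c ⟨⟨c', hc', hcc'⟩, hc⟩ => ?_⟩
    cases StrongDual.toWeakDual.injective hcc'
    exact hB c hc' hc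
  have hKcpt : IsCompact K := WeakDual.isCompact_of_bounded_of_closed hKbdd
    (hC.inter (isClosed_le continuous_const (WeakDual.eval_continuous x)))
  obtain ⟨_, ⟨⟨c₀, hc₀, rfl⟩, hc₁₀⟩, hmax⟩ := hKcpt.exists_isMaxOn
    ⟨_, ⟨c₁, hc₁, rfl⟩, le_refl (c₁ x)⟩ (WeakDual.eval_continuous x).continuousOn
  refine ⟨c₀, hc₀, ⟨c₀, hc₀, rfl⟩, ?_⟩
  rintro _ ⟨c, hc, rfl⟩
  rcases le_or_gt (c₁ x) (c x) with h | h
  · exact hmax ⟨⟨c, hc, rfl⟩, h⟩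
  · exact h.le.trans hc₁₀

end

theorem lD_attains_supremum_general
    {E : Type*} [NormedAddCommGroup E] [NormedSpace ℝ E] [CompleteSpace E]
    (D : Set (StrongDual ℝ E))
    (hDcpt : IsCompact (StrongDual.toWeakDual '' D))
    (C : Set (StrongDual ℝ E))
    (hCcl : IsClosed (StrongDual.toWeakDual '' C))
    (hfin : ∀ y ∈ LD D, ∃ r : ℝ, IsLUB ((fun c : StrongDual ℝ E => c y) '' C) r) :
    ∀ x ∈ LD D, ∃ c₀ ∈ C, IsLUB ((fun c : StrongDual ℝ E => c x) '' C) (c₀ x) := by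
  intro x hx
  have hdir : ∀ z, ∃ t > (0 : ℝ), BddAbove ((fun c : StrongDual ℝ E => c (x + t • z)) '' C) := by
    intro z
    obtain ⟨t, ht, hxz⟩ := exists_pos_add_smul_mem_LD (bddAbove_eval_of_isCompact hDcpt) hx z
    obtain ⟨r, hr⟩ := hfin _ hxz
    exact ⟨t, ht, hr.bddAbove⟩
  obtain ⟨r, hr⟩ := hfin x hx
  obtain ⟨c₀, hc₀, hmax⟩ :=
    exists_isGreatest_eval_of_isClosed hCcl (Set.image_nonempty.mp hr.nonempty) hdir
  exact ⟨c₀, hc₀, hmax.isLUB⟩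

/-- If `D ⊆ E*` is a nonempty weak*-compact convex set with `0 ∉ D` and `C ⊆ E*` is a
weak*-closed convex set on which every `y ∈ L_D` has finite supremum, then every
`x ∈ L_D` attains its supremum on `C`. -/
theorem lD_attains_supremum
    {E : Type*} [NormedAddCommGroup E] [NormedSpace ℝ E] [CompleteSpace E]
    (D : Set (StrongDual ℝ E)) (hDne : D.Nonempty)
    (hDcpt : IsCompact (StrongDual.toWeakDual '' D)) (hDconv : Convex ℝ D)
    (hD0 : (0 : StrongDual ℝ E) ∉ D)
    (C : Set (StrongDual ℝ E))
    (hCcl : IsClosed (StrongDual.toWeakDual '' C)) (hCconv : Convex ℝ C)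
    (hfin : ∀ y ∈ LD D, ∃ r : ℝ, IsLUB ((fun c : StrongDual ℝ E => c y) '' C) r) :
    ∀ x ∈ LD D, ∃ c₀ ∈ C, IsLUB ((fun c : StrongDual ℝ E => c x) '' C) (c₀ x) :=
  lD_attains_supremum_general D hDcpt C hCcl hfin
end

section
/- Let E be a real Banach space, D ⊆ E* a nonempty convex weakly compact set with 0 ∉ D, and B ⊆ E* a nonempty set such that some x₀ ∈ L_D has finite supremum on B. Then the norm closure of co(B) + Λ_D is contained in (norm-closed convex hull of B) + Λ_D. -/
/-!
Let `z` lie in the closure. Near `z`, the functionals `c + w` with `c ∈ co B`, `w ∈ Λ_D` take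
values above `z x₀ - 1` at `x₀`. Since `c x₀ ≤ r` and `d x₀ ≤ r₀ < 0` for `d ∈ D`, the cone part
`w` of such a sum lies in `{0} ∪ [0, M] • D` for one fixed `M`, and this set is weakly compact. In
the weak topology a closed set plus a compact set is closed, and the weak and norm closures of the
convex set `co B` agree; hence `z ∈ cl (co B) + ({0} ∪ [0, M] • D) ⊆ cl (co B) + Λ_D`.
-/

open Filter Topology Pointwise

theorem closure_add_subset_of_isCompact {G : Type*} [AddGroup G] [TopologicalSpace G]
    [IsTopologicalAddGroup G] (s : Set G) {k : Set G} (hk : IsCompact k) :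
    closure (s + k) ⊆ closure s + k :=
  closure_minimal (Set.add_subset_add_right subset_closure)
    (isClosed_closure.add_right_of_isCompact hk)

theorem Convex.closure_add_subset_of_isCompact_toWeakSpace {𝕜 F : Type*} [RCLike 𝕜]
    [AddCommGroup F] [Module 𝕜 F] [Module ℝ F] [IsScalarTower ℝ 𝕜 F] [TopologicalSpace F]
    [IsTopologicalAddGroup F] [ContinuousSMul 𝕜 F] [LocallyConvexSpace ℝ F]
    {s k : Set F} (hs : Convex ℝ s) (hk : IsCompact (toWeakSpace 𝕜 F '' k)) :
    closure (s + k) ⊆ closure s + k := by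
  set T := toWeakSpace 𝕜 F
  rw [← Set.image_subset_image_iff T.injective, Set.image_add, hs.toWeakSpace_closure 𝕜]
  calc T '' closure (s + k) ⊆ closure (T '' (s + k)) :=
        image_closure_subset_closure_image (toWeakSpaceCLM 𝕜 F).continuous
    _ = closure (T '' s + T '' k) := by rw [Set.image_add]
    _ ⊆ closure (T '' s) + T '' k := closure_add_subset_of_isCompact _ hk

def truncCone {V : Type*} [AddCommGroup V] [Module ℝ V] (D : Set V) (M : ℝ) : Set V :=
  insert 0 (Set.Icc 0 M • D)

theorem isCompact_truncCone {V : Type*} [AddCommGroup V] [Module ℝ V] [TopologicalSpace V]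
    [ContinuousSMul ℝ V] {D : Set V} (hD : IsCompact D) (M : ℝ) : IsCompact (truncCone D M) :=
  (isCompact_Icc.smul_set hD).insert 0

theorem image_truncCone {V W F : Type*} [AddCommGroup V] [Module ℝ V] [AddCommGroup W]
    [Module ℝ W] [FunLike F V W] [LinearMapClass F ℝ V W] (f : F) (D : Set V) (M : ℝ) :
    f '' truncCone D M = truncCone (f '' D) M := by
  simp only [truncCone, Set.image_insert_eq, map_zero, ← Set.image2_smul, Set.image_image2,
    Set.image2_image_right, map_smul]

section Dual

variable {E : Type*} [NormedAddCommGroup E] [NormedSpace ℝ E] {D : Set (StrongDual ℝ E)}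

theorem truncCone_subset_LambdaD (M : ℝ) : truncCone D M ⊆ LambdaD D := by
  rintro _ (rfl | ⟨l, ⟨hl, -⟩, d, hd, rfl⟩)
  · exact Or.inl rfl
  · rcases hl.eq_or_lt with rfl | hl
    · exact Or.inl (zero_smul ℝ d)
    · exact Or.inr ⟨l, hl, d, hd, rfl⟩

theorem exists_LambdaD_inter_subset_truncCone {x₀ : E} (hx₀ : x₀ ∈ LD D) (a : ℝ) :
    ∃ M, {w ∈ LambdaD D | a ≤ w x₀} ⊆ truncCone D M := by
  obtain ⟨r₀, hr₀, hD⟩ := hx₀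
  refine ⟨a / r₀, ?_⟩
  rintro _ ⟨rfl | ⟨l, hl, d, hd, rfl⟩, ha⟩
  · exact Set.mem_insert 0 _
  · refine Set.mem_insert_of_mem _ (Set.smul_mem_smul ⟨hl.le, ?_⟩ hd)
    have hd_le : l * d x₀ ≤ l * r₀ := mul_le_mul_of_nonneg_left (hD d hd) hl.le
    change a ≤ l * d x₀ at ha
    rw [le_div_iff_of_neg hr₀]
    linarith

end Dual

theorem closure_coneSum_subset_general
    {E : Type*} [NormedAddCommGroup E] [NormedSpace ℝ E]
    (D : Set (StrongDual ℝ E))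
    (hDcpt : IsCompact (toWeakSpace ℝ (StrongDual ℝ E) '' D))
    (B : Set (StrongDual ℝ E))
    (hx₀ : ∃ x₀ ∈ LD D, ∃ r : ℝ, ∀ b ∈ B, b x₀ ≤ r) :
    closure (convexHull ℝ B + LambdaD D) ⊆ closure (convexHull ℝ B) + LambdaD D := by
  obtain ⟨x₀, hx₀D, r, hBr⟩ := hx₀
  intro z hz
  obtain ⟨M, hM⟩ := exists_LambdaD_inter_subset_truncCone hx₀D (z x₀ - 1 - r)
  have hcoB : ∀ c ∈ convexHull ℝ B, c x₀ ≤ r := fun c hc =>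
    convexHull_min hBr
      ((convex_Iic r).linear_preimage (ContinuousLinearMap.apply ℝ ℝ x₀).toLinearMap) hc
  let N : Set (StrongDual ℝ E) := {f | z x₀ - 1 < f x₀}
  have hN : IsOpen N := isOpen_lt continuous_const (ContinuousLinearMap.apply ℝ ℝ x₀).continuous
  have hsub : N ∩ (convexHull ℝ B + LambdaD D) ⊆ convexHull ℝ B + truncCone D M := by
    rintro _ ⟨hfN, c, hc, w, hw, rfl⟩
    have hcw : z x₀ - 1 < c x₀ + w x₀ := hfN
    exact ⟨c, hc, w, hM ⟨hw, by linarith [hcoB c hc]⟩, rfl⟩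
  have hzN : z ∈ closure (N ∩ (convexHull ℝ B + LambdaD D)) :=
    hN.inter_closure ⟨show z x₀ - 1 < z x₀ from sub_one_lt _, hz⟩
  have hcpt : IsCompact (toWeakSpace ℝ (StrongDual ℝ E) '' truncCone D M) := by
    rw [image_truncCone]
    exact isCompact_truncCone hDcpt M
  exact Set.add_subset_add_left (truncCone_subset_LambdaD M)
    ((convex_convexHull ℝ B).closure_add_subset_of_isCompact_toWeakSpace hcpt
      (closure_mono hsub hzN))

/-- If `D ⊆ E*` is a nonempty convex weakly compact set with `0 ∉ D` and `B ⊆ E*` is a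
nonempty set such that some `x₀ ∈ L_D` has finite supremum on `B`, then
`norm-closure(co(B) + Λ_D) ⊆ (norm-closed convex hull of B) + Λ_D`. -/
theorem closure_coneSum_subset
    {E : Type*} [NormedAddCommGroup E] [NormedSpace ℝ E] [CompleteSpace E]
    (D : Set (StrongDual ℝ E)) (hDne : D.Nonempty) (hDconv : Convex ℝ D)
    (hDcpt : IsCompact (toWeakSpace ℝ (StrongDual ℝ E) '' D))
    (hD0 : (0 : StrongDual ℝ E) ∉ D)
    (B : Set (StrongDual ℝ E)) (hBne : B.Nonempty)
    (hx₀ : ∃ x₀ ∈ LD D, ∃ r : ℝ, ∀ b ∈ B, b x₀ ≤ r) :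
    closure (convexHull ℝ B + LambdaD D) ⊆ closure (convexHull ℝ B) + LambdaD D :=
  closure_coneSum_subset_general D hDcpt B hx₀
end

section
/- Let E be a real Banach space and D a nonempty bounded subset of E with the following property: for every bounded subset B of E, if every x* ∈ L_D(E*,E) := {x* ∈ E* : sup_{d ∈ D} ⟨x*,d⟩ < 0} attains its supremum on B, then B is weakly relatively compact. Then D itself is weakly relatively compact. -/
open Filter Topology

/-! Every functional that is negative on `D` attains its maximum on `insert 0 D` at `0`, so
`insert 0 D` is weakly relatively compact by hypothesis, and hence so is its subset `D`. -/

theorem obstacle_is_weakly_relatively_compact_general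
    {E : Type*} [NormedAddCommGroup E] [NormedSpace ℝ E]
    (D : Set E) (hDb : Bornology.IsBounded D)
    (hprop : ∀ B : Set E, Bornology.IsBounded B →
      (∀ x' : StrongDual ℝ E, (∃ r < (0 : ℝ), ∀ d ∈ D, x' d ≤ r) →
        ∃ b₀ ∈ B, ∀ b ∈ B, x' b ≤ x' b₀) →
      IsCompact (closure (toWeakSpace ℝ E '' B))) :
    IsCompact (closure (toWeakSpace ℝ E '' D)) := by
  have hmax : ∀ x' : StrongDual ℝ E, (∃ r < (0 : ℝ), ∀ d ∈ D, x' d ≤ r) →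
      ∃ b₀ ∈ insert 0 D, ∀ b ∈ insert 0 D, x' b ≤ x' b₀ := by
    rintro x' ⟨r, hr, hD⟩
    refine ⟨0, Set.mem_insert 0 D, ?_⟩
    rintro b (rfl | hb)
    · exact le_rfl
    · simpa using (hD b hb).trans hr.le
  exact (hprop _ (hDb.insert 0) hmax).of_isClosed_subset isClosed_closure
    (closure_mono (Set.image_mono (Set.subset_insert 0 D)))

/-- Final remark: let `D` be a nonempty bounded subset of a Banach space `E` with the
property that every bounded set `B ⊆ E` on which all functionals of
`L_D(E*, E) = {x* : sup_{d ∈ D} ⟨x*, d⟩ < 0}` attain their suprema is weakly relatively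
compact. Then `D` itself is weakly relatively compact. -/
theorem obstacle_is_weakly_relatively_compact
    {E : Type*} [NormedAddCommGroup E] [NormedSpace ℝ E] [CompleteSpace E]
    (D : Set E) (hDne : D.Nonempty) (hDb : Bornology.IsBounded D)
    (hprop : ∀ B : Set E, Bornology.IsBounded B →
      (∀ x' : StrongDual ℝ E, (∃ r < (0 : ℝ), ∀ d ∈ D, x' d ≤ r) →
        ∃ b₀ ∈ B, ∀ b ∈ B, x' b ≤ x' b₀) →
      IsCompact (closure (toWeakSpace ℝ E '' B))) :
    IsCompact (closure (toWeakSpace ℝ E '' D)) :=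
  obstacle_is_weakly_relatively_compact_general D hDb hprop
end

section
/- Let E be a real Banach space, C a weak*-closed convex subset of E*, and D a nonempty bounded weak*-closed convex subset of E* such that there exists y ∈ L_D with sup{⟨y,c*⟩ : c* ∈ C} < +∞. Then every x₀* ∈ C can be written as x₀* = x₁* + λ₁ d₁* with λ₁ ≥ 0, d₁* ∈ D and x₁* ∈ C such that for every ε > 0 the set x₁* − εD := {x₁* − ε d* : d* ∈ D} has empty intersection with C. -/
open Filter Topology

/-!
Among all ways of moving from `x₀*` inside `C` in a direction of `-D`, take the longest one:
the set of admissible lengths `t ≥ 0` with `x₀* - t d* ∈ C` for some `d* ∈ D` is bounded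
(test against `y`, which is negative on `D` and bounded above on `C`) and weak*-compact
(Banach–Alaoglu for `D`), so it has a maximum `λ₁`. If some `x₁* - ε d*` were still in `C`,
then, `D` being convex, `x₀* - (λ₁ + ε) d'*` would be in `C` for a convex combination `d'*`
of `d₁*` and `d*`, contradicting maximality.
-/

section AdmissibleSteps

variable {F : Type*} [AddCommGroup F] [Module ℝ F]

def admissibleSteps (C D : Set F) (x : F) : Set ℝ :=
  {t | 0 ≤ t ∧ ∃ d ∈ D, x - t • d ∈ C}

theorem zero_mem_admissibleSteps {C D : Set F} {x : F} (hx : x ∈ C) (hD : D.Nonempty) :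
    0 ∈ admissibleSteps C D x :=
  ⟨le_rfl, hD.some, hD.some_mem, by simpa using hx⟩

theorem admissibleSteps_image_linearEquiv {G : Type*} [AddCommGroup G] [Module ℝ G]
    (e : F ≃ₗ[ℝ] G) (C D : Set F) (x : F) :
    admissibleSteps (e '' C) (e '' D) (e x) = admissibleSteps C D x := by
  ext t
  simp only [admissibleSteps, Set.mem_ofPred_eq, Set.exists_mem_image, ← map_smul, ← map_sub,
    e.injective.mem_set_image]

theorem bddAbove_admissibleSteps {C D : Set F} (φ : F →ₗ[ℝ] ℝ) {r₀ r : ℝ} (hr₀ : r₀ < 0)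
    (hD : ∀ d ∈ D, φ d ≤ r₀) (hC : ∀ c ∈ C, φ c ≤ r) (x : F) :
    BddAbove (admissibleSteps C D x) := by
  refine ⟨(r - φ x) / -r₀, ?_⟩
  rintro t ⟨ht, d, hd, hxtd⟩
  have hφ : φ x - t * φ d ≤ r := by simpa using hC _ hxtd
  rw [le_div_iff₀ (by linarith)]
  nlinarith [hD d hd]

theorem isCompact_admissibleSteps [TopologicalSpace F] [IsTopologicalAddGroup F]
    [ContinuousSMul ℝ F] {C D : Set F} (hC : IsClosed C) (hD : IsCompact D) (x : F)
    (hbdd : BddAbove (admissibleSteps C D x)) :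
    IsCompact (admissibleSteps C D x) := by
  obtain ⟨M, hM⟩ := hbdd
  have hK : IsCompact ((Set.Icc 0 M ×ˢ D) ∩ {p : ℝ × F | x - p.1 • p.2 ∈ C}) :=
    (isCompact_Icc.prod hD).inter_right <|
      hC.preimage (continuous_const.sub (continuous_fst.smul continuous_snd))
  convert hK.image continuous_fst using 1
  ext t
  constructor
  · rintro ⟨ht0, d, hd, hxtd⟩
    exact ⟨(t, d), ⟨⟨⟨ht0, hM ⟨ht0, d, hd, hxtd⟩⟩, hd⟩, hxtd⟩, rfl⟩
  · rintro ⟨⟨t, d⟩, ⟨⟨⟨ht0, -⟩, hd⟩, hxtd⟩, rfl⟩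
    exact ⟨ht0, d, hd, hxtd⟩

theorem sub_smul_notMem_of_isGreatest_admissibleSteps {C D : Set F} (hD : Convex ℝ D)
    {x d₁ : F} {l₁ : ℝ} (hmax : IsGreatest (admissibleSteps C D x) l₁) (hd₁ : d₁ ∈ D)
    {ε : ℝ} (hε : 0 < ε) {d : F} (hd : d ∈ D) :
    x - l₁ • d₁ - ε • d ∉ C := by
  intro hmem
  have hl₁ : 0 ≤ l₁ := hmax.1.1
  have hsum : l₁ + ε ≠ 0 := by positivity
  set d' := (l₁ / (l₁ + ε)) • d₁ + (ε / (l₁ + ε)) • d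
  have hd' : d' ∈ D := hD hd₁ hd (by positivity) (by positivity) (by field_simp)
  have hstep : x - (l₁ + ε) • d' = x - l₁ • d₁ - ε • d := by
    simp only [d', smul_add, smul_smul, mul_div_cancel₀ _ hsum]
    abel
  have : l₁ + ε ≤ l₁ := hmax.2 ⟨by positivity, d', hd', hstep ▸ hmem⟩
  linarith

end AdmissibleSteps

theorem one_side_bishop_phelps_decomposition_general
    {E : Type*} [NormedAddCommGroup E] [NormedSpace ℝ E]
    (C D : Set (StrongDual ℝ E))
    (hCcl : IsClosed (StrongDual.toWeakDual '' C))
    (hDcl : IsClosed (StrongDual.toWeakDual '' D)) (hDconv : Convex ℝ D)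
    (hDne : D.Nonempty) (hDb : Bornology.IsBounded D)
    (hy : ∃ y ∈ LD D, ∃ r : ℝ, ∀ c ∈ C, c y ≤ r) :
    ∀ x₀ ∈ C, ∃ x₁ ∈ C, ∃ l₁ : ℝ, 0 ≤ l₁ ∧ ∃ d₁ ∈ D,
      x₀ = x₁ + l₁ • d₁ ∧ ∀ ε > (0 : ℝ), ∀ d ∈ D, x₁ - ε • d ∉ C := by
  obtain ⟨y, ⟨r₀, hr₀, hDy⟩, r, hCy⟩ := hy
  intro x₀ hx₀
  have hDcpt : IsCompact (StrongDual.toWeakDual '' D) := by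
    refine WeakDual.isCompact_of_bounded_of_closed ?_ hDcl
    rwa [← WeakDual.isBounded_toWeakDual_preimage_iff_isBounded,
      Set.preimage_image_eq _ StrongDual.toWeakDual.injective]
  have hbdd : BddAbove (admissibleSteps C D x₀) :=
    bddAbove_admissibleSteps (ContinuousLinearMap.apply ℝ ℝ y).toLinearMap hr₀ hDy hCy x₀
  have hcpt : IsCompact (admissibleSteps C D x₀) := by
    rw [← admissibleSteps_image_linearEquiv StrongDual.toWeakDual] at hbdd ⊢
    exact isCompact_admissibleSteps hCcl hDcpt _ hbdd
  obtain ⟨l₁, hmax⟩ := hcpt.exists_isGreatest ⟨0, zero_mem_admissibleSteps hx₀ hDne⟩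
  obtain ⟨hl₁, d₁, hd₁, hx₁⟩ := hmax.1
  exact ⟨x₀ - l₁ • d₁, hx₁, l₁, hl₁, d₁, hd₁, by abel, fun ε hε d hd ↦
    sub_smul_notMem_of_isGreatest_admissibleSteps hDconv hmax hd₁ hε hd⟩

/-- Decomposition step of the one-side Bishop–Phelps theorem: if `C`, `D` are weak*-closed
convex subsets of `E*`, `D` nonempty and bounded, and some `y ∈ L_D` has
`sup(y, C) < +∞`, then every `x₀* ∈ C` can be written as `x₀* = x₁* + λ₁ d₁*` with
`λ₁ ≥ 0`, `d₁* ∈ D`, `x₁* ∈ C`, and `(x₁* - εD) ∩ C = ∅` for every `ε > 0`. -/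
theorem one_side_bishop_phelps_decomposition
    {E : Type*} [NormedAddCommGroup E] [NormedSpace ℝ E] [CompleteSpace E]
    (C D : Set (StrongDual ℝ E))
    (hCcl : IsClosed (StrongDual.toWeakDual '' C)) (hCconv : Convex ℝ C)
    (hDcl : IsClosed (StrongDual.toWeakDual '' D)) (hDconv : Convex ℝ D)
    (hDne : D.Nonempty) (hDb : Bornology.IsBounded D)
    (hy : ∃ y ∈ LD D, ∃ r : ℝ, ∀ c ∈ C, c y ≤ r) :
    ∀ x₀ ∈ C, ∃ x₁ ∈ C, ∃ l₁ : ℝ, 0 ≤ l₁ ∧ ∃ d₁ ∈ D,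
      x₀ = x₁ + l₁ • d₁ ∧ ∀ ε > (0 : ℝ), ∀ d ∈ D, x₁ - ε • d ∉ C :=
  one_side_bishop_phelps_decomposition_general C D hCcl hDcl hDconv hDne hDb hy
end
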